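/- arXiv:1512.09001 — 8 statements merged into one kernel-verified Lean document; each statement's English description precedes it below -/
import Mathlib

section
/- Let ψ : [0,∞) → ℝ be twice differentiable with ψ'' increasing to +∞. Then for every A > 0 and every y₀ > 0 there exists y ≥ y₀ such that |ψ''(x)/ψ''(y) − 1| ≤ 1/A whenever |x − y| ≤ A·(ψ''(y))^{−1/2}. -/
/-!
Fix `c > 1` and suppose `f = ψ''` grew by a factor more than `c` across every step
`y ↦ y + L f(y)^q` (`q < 0`) starting beyond `y₁`. Along the orbit of `y₁`, `f` then grows like
`cⁿ` while the steps shrink like `(c^q)ⁿ`; precisely, `y + L/(1 - c^q) · f(y)^q` does not increase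
along the orbit, so the orbit stays below `Y = y₁ + L/(1 - c^q) · f(y₁)^q`, and monotonicity caps
`f` on it by `f Y`, contradicting geometric growth. Hence some step `[y, y + 2A f(y)^q]` sees
growth at most `1 + 1/A`, and its midpoint is the required point.
-/

open Real Filter

lemma abs_div_sub_one_le_of_mem_Icc {a b d ε : ℝ} (ha : 0 < a) (hε : 0 ≤ ε)
    (hb : b ∈ Set.Icc a ((1 + ε) * a)) (hd : d ∈ Set.Icc a ((1 + ε) * a)) :
    |b / d - 1| ≤ ε := by
  obtain ⟨hab, hb⟩ := hb
  obtain ⟨had, hd⟩ := hd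
  have hd0 : 0 < d := ha.trans_le had
  rw [abs_le, le_sub_iff_add_le, sub_le_iff_le_add, le_div_iff₀ hd0, div_le_iff₀ hd0]
  constructor <;> nlinarith [mul_le_mul_of_nonneg_left had hε]

section GrowthAlongSteps

variable {f : ℝ → ℝ} {c L q : ℝ}

lemma step_potential_le (hc : 1 < c) (hq : q < 0) (hL : 0 ≤ L) {y : ℝ} (hy : 0 < f y)
    (hgrow : c * f y ≤ f (y + L * f y ^ q)) :
    y + L * f y ^ q + L / (1 - c ^ q) * f (y + L * f y ^ q) ^ q ≤
      y + L / (1 - c ^ q) * f y ^ q := by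
  have hr : c ^ q < 1 := rpow_lt_one_of_one_lt_of_neg hc hq
  have hK : 0 ≤ L / (1 - c ^ q) := div_nonneg hL (by linarith)
  have hstep : f (y + L * f y ^ q) ^ q ≤ c ^ q * f y ^ q := by
    rw [← mul_rpow (by linarith) hy.le]
    exact rpow_le_rpow_of_nonpos (by positivity) hgrow hq.le
  have hr' : 1 - c ^ q ≠ 0 := by linarith
  calc _ ≤ y + L * f y ^ q + L / (1 - c ^ q) * (c ^ q * f y ^ q) := by gcongr
    _ = _ := by field_simp; ring

theorem MonotoneOn.exists_apply_step_le_mul (hf : MonotoneOn f (Set.Ici 0)) (hc : 1 < c)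
    (hq : q < 0) (hL : 0 ≤ L) {y₁ : ℝ} (hy₁ : 0 ≤ y₁) (hfy₁ : 0 < f y₁) :
    ∃ y ≥ y₁, f (y + L * f y ^ q) ≤ c * f y := by
  by_contra! hgrow
  let T : ℝ → ℝ := fun y => y + L * f y ^ q
  let Φ : ℝ → ℝ := fun y => y + L / (1 - c ^ q) * f y ^ q
  have hK : 0 ≤ L / (1 - c ^ q) :=
    div_nonneg hL (by linarith [rpow_lt_one_of_one_lt_of_neg hc hq])
  have orbit : ∀ n : ℕ, y₁ ≤ T^[n] y₁ ∧ c ^ n * f y₁ ≤ f (T^[n] y₁) ∧ Φ (T^[n] y₁) ≤ Φ y₁ := by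
    intro n
    induction n with
    | zero => simp
    | succ n ih =>
      obtain ⟨hle, hgeom, hΦ⟩ := ih
      have hpos : 0 < f (T^[n] y₁) := lt_of_lt_of_le (by positivity) hgeom
      have hstep := (hgrow _ hle).le
      rw [Function.iterate_succ_apply']
      refine ⟨hle.trans (le_add_of_nonneg_right (by positivity)), ?_,
        (step_potential_le hc hq hL hpos hstep).trans hΦ⟩
      calc c ^ (n + 1) * f y₁ = c * (c ^ n * f y₁) := by ring
        _ ≤ c * f (T^[n] y₁) := by gcongr
        _ ≤ _ := hstep
  obtain ⟨n, hn⟩ := pow_unbounded_of_one_lt (f (Φ y₁) / f y₁) hc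
  obtain ⟨hle, hgeom, hΦ⟩ := orbit n
  have hpos : 0 < f (T^[n] y₁) := lt_of_lt_of_le (by positivity) hgeom
  have hbound : T^[n] y₁ ≤ Φ y₁ := (le_add_of_nonneg_right (by positivity)).trans hΦ
  have hcap := hf (hy₁.trans hle) (hy₁.trans (hle.trans hbound)) hbound
  rw [div_lt_iff₀ hfy₁] at hn
  linarith

theorem MonotoneOn.exists_abs_div_sub_one_le (hf : MonotoneOn f (Set.Ici 0)) {A : ℝ}
    (hA : 0 < A) (hq : q < 0) {y₁ : ℝ} (hy₁ : 0 ≤ y₁) (hfy₁ : 0 < f y₁) :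
    ∃ z ≥ y₁, ∀ x ≥ (0 : ℝ), |x - z| ≤ A * f z ^ q → |f x / f z - 1| ≤ 1 / A := by
  obtain ⟨y, hy, hslow⟩ := hf.exists_apply_step_le_mul (c := 1 + 1 / A) (L := 2 * A)
    (by simp [hA]) hq (by positivity) hy₁ hfy₁
  have hy0 : 0 ≤ y := hy₁.trans hy
  have hfy : 0 < f y := hfy₁.trans_le (hf hy₁ hy0 hy)
  set δ := A * f y ^ q with hδ
  have hδ0 : 0 ≤ δ := by positivity
  have hslow' : f (y + 2 * δ) ≤ (1 + 1 / A) * f y := by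
    rwa [hδ, ← mul_assoc]
  have hmem : ∀ x ∈ Set.Icc y (y + 2 * δ), f x ∈ Set.Icc (f y) ((1 + 1 / A) * f y) :=
    fun x ⟨hyx, hx⟩ => ⟨hf hy0 (hy0.trans hyx) hyx,
      (hf (hy0.trans hyx) (hy0.trans (hyx.trans hx)) hx).trans hslow'⟩
  refine ⟨y + δ, by linarith, fun x hx hxz => ?_⟩
  have hfz := hmem (y + δ) ⟨by linarith, by linarith⟩
  have hxz' : |x - (y + δ)| ≤ δ :=
    hxz.trans (mul_le_mul_of_nonneg_left (rpow_le_rpow_of_nonpos hfy hfz.1 hq.le) hA.le)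
  obtain ⟨hlo, hhi⟩ := abs_le.mp hxz'
  exact abs_div_sub_one_le_of_mem_Icc hfy (by positivity)
    (hmem x ⟨by linarith, by linarith⟩) hfz

end GrowthAlongSteps

theorem stmt_0_general (ψ : ℝ → ℝ)
    (hmono : MonotoneOn (iteratedDeriv 2 ψ) (Set.Ici 0))
    (hinf : Tendsto (iteratedDeriv 2 ψ) atTop atTop) :
    ∀ A > (0:ℝ), ∀ y₀ > (0:ℝ), ∃ y ≥ y₀,
      ∀ x ≥ (0:ℝ), |x - y| ≤ A * (iteratedDeriv 2 ψ y) ^ (-(1:ℝ)/2) →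
        |iteratedDeriv 2 ψ x / iteratedDeriv 2 ψ y - 1| ≤ 1 / A := by
  intro A hA y₀ hy₀
  obtain ⟨y₁, hpos, hy₁⟩ :=
    ((hinf.eventually_gt_atTop 0).and (eventually_ge_atTop y₀)).exists
  obtain ⟨y, hy, hnear⟩ :=
    hmono.exists_abs_div_sub_one_le (q := -(1:ℝ)/2) hA (by norm_num) (hy₀.le.trans hy₁) hpos
  exact ⟨y, hy₁.trans hy, hnear⟩

/-- If ψ'' increases to +∞, then ψ'' is almost constant on intervals of
length ≍ (ψ''(y))^{-1/2} around suitably chosen points y. -/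
theorem stmt_0 (ψ : ℝ → ℝ)
    (hC2 : ContDiffOn ℝ 2 ψ (Set.Ici 0))
    (hmono : MonotoneOn (iteratedDeriv 2 ψ) (Set.Ici 0))
    (hinf : Tendsto (iteratedDeriv 2 ψ) atTop atTop) :
    ∀ A > (0:ℝ), ∀ y₀ > (0:ℝ), ∃ y ≥ y₀,
      ∀ x ≥ (0:ℝ), |x - y| ≤ A * (iteratedDeriv 2 ψ y) ^ (-(1:ℝ)/2) →
        |iteratedDeriv 2 ψ x / iteratedDeriv 2 ψ y - 1| ≤ 1 / A :=
  stmt_0_general ψ hmono hinf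
end

section
/- For every positive integer k and every real t ≥ 1, if z is a complex number with |z| = 1 − t/k, then |log|1 − z^k|| ≤ C·e^{−t} for an absolute constant C. -/
open Real

/-! On the circle `‖z‖ = 1 - t/k` we have `‖z^k‖ = (1 - t/k)^k ≤ e^{-t} ≤ 1/2`, and
`|log ‖1 - w‖| ≤ 2‖w‖` whenever `‖w‖ ≤ 1/2`. -/

theorem Real.abs_log_le_two_mul_of_abs_sub_one_le {m x : ℝ} (hx : x ≤ 1 / 2)
    (h : |m - 1| ≤ x) : |log m| ≤ 2 * x := by
  obtain ⟨hlower, hupper⟩ := abs_le.mp h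
  have hx0 : 0 ≤ x := (abs_nonneg _).trans h
  have hm : 1 / 2 ≤ m := by linarith
  have hm0 : 0 < m := by linarith
  rw [abs_le]
  constructor
  · have hinv : 1 - m⁻¹ ≤ log m := one_sub_inv_le_log_of_pos hm0
    have : m⁻¹ ≤ 1 + 2 * x := (inv_le_iff_one_le_mul₀' hm0).mpr (by nlinarith)
    linarith
  · linarith [log_le_sub_one_of_pos hm0]

theorem abs_log_norm_one_sub_le {E : Type*} [SeminormedAddCommGroup E] [One E] [NormOneClass E]
    {w : E} (hw : ‖w‖ ≤ 1 / 2) : |log ‖1 - w‖| ≤ 2 * ‖w‖ := by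
  refine abs_log_le_two_mul_of_abs_sub_one_le hw ?_
  simpa using abs_norm_sub_norm_le (1 - w) 1

theorem Real.exp_neg_le_half {t : ℝ} (ht : 1 ≤ t) : exp (-t) ≤ 1 / 2 := by
  have htwo : 2 < exp 1 := by linarith [add_one_lt_exp (one_ne_zero : (1 : ℝ) ≠ 0)]
  calc exp (-t) ≤ exp (-1) := exp_le_exp.mpr (by linarith)
    _ = (exp 1)⁻¹ := exp_neg 1
    _ ≤ 1 / 2 := by rw [one_div]; exact inv_anti₀ two_pos htwo.le

/-- For |z| = 1 - t/k with 1 ≤ t ≤ k, |log|1 - z^k|| ≤ C e^{-t}. -/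
theorem stmt_1 : ∃ C > (0:ℝ), ∀ (k : ℕ), 0 < k → ∀ t : ℝ, 1 ≤ t → t ≤ k →
    ∀ z : ℂ, ‖z‖ = 1 - t / k →
      |Real.log (‖1 - z ^ k‖)| ≤ C * Real.exp (-t) := by
  refine ⟨2, two_pos, fun k _ t ht htk z hz => ?_⟩
  have hpow : ‖z ^ k‖ ≤ exp (-t) := by
    rw [norm_pow, hz]
    exact one_sub_div_pow_le_exp_neg htk
  calc |log ‖1 - z ^ k‖| ≤ 2 * ‖z ^ k‖ :=
        abs_log_norm_one_sub_le (hpow.trans (exp_neg_le_half ht))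
    _ ≤ 2 * exp (-t) := by gcongr
end

section
/- For every positive integer k and every real t with 1 ≤ t, if z is a complex number with |z| = 1 + t/k, then |log|1 − z^k| − k·log|z|| ≤ C·e^{−c·min(t,k)} for absolute constants C, c > 0. -/
open Real

/-!
Put `R = |z|^k = (1 + t/k)^k`, so that `k log|z| = log R` and `|1 - z^k|` lies within `1` of `R`.
Since `log` has derivative `1/x`, `log|1 - z^k|` is within `2/R` of `log R` once `R ≥ 2`, and
`R ≥ 2^min(t, k)` by concavity of `x ↦ 2^x` on `[0, 1]`. This gives `C = 2`, `c = log 2`.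
-/

namespace Real

theorem log_sub_log_le_sub_div {a b : ℝ} (ha : 0 < a) (hb : 0 < b) :
    log a - log b ≤ (a - b) / b := by
  rw [← log_div ha.ne' hb.ne', sub_div, div_self hb.ne']
  exact log_le_sub_one_of_pos (div_pos ha hb)

theorem abs_log_sub_log_le_abs_sub_div_min {a b : ℝ} (ha : 0 < a) (hb : 0 < b) :
    |log a - log b| ≤ |a - b| / min a b := by
  have hmin : 0 < min a b := lt_min ha hb
  rw [abs_sub_le_iff]
  constructor
  · calc log a - log b ≤ (a - b) / b := log_sub_log_le_sub_div ha hb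
      _ ≤ |a - b| / min a b :=
        div_le_div₀ (abs_nonneg _) (le_abs_self _) hmin (min_le_right a b)
  · calc log b - log a ≤ (b - a) / a := log_sub_log_le_sub_div hb ha
      _ ≤ |a - b| / min a b := by
        rw [abs_sub_comm]
        exact div_le_div₀ (abs_nonneg _) (le_abs_self _) hmin (min_le_left a b)

theorem two_rpow_min_le_one_add_div_pow {t : ℝ} (ht : 0 ≤ t) {k : ℕ} (hk : 0 < k) :
    (2 : ℝ) ^ min t k ≤ (1 + t / k) ^ k := by
  have hk' : (0 : ℝ) < k := Nat.cast_pos.mpr hk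
  rcases le_total t k with htk | hkt
  · have hx : t / k ≤ 1 := (div_le_one hk').mpr htk
    have hconc : (2 : ℝ) ^ (t / k) ≤ 1 + t / k := by
      simpa [one_add_one_eq_two] using
        rpow_one_add_le_one_add_mul_self (s := 1) (by norm_num) (div_nonneg ht hk'.le) hx
    calc (2 : ℝ) ^ min t k = ((2 : ℝ) ^ (t / k)) ^ k := by
          rw [min_eq_left htk, ← rpow_mul_natCast zero_le_two, div_mul_cancel₀ _ hk'.ne']
      _ ≤ (1 + t / k) ^ k := by gcongr
  · have hx : (2 : ℝ) ≤ 1 + t / k := by linarith [(one_le_div hk').mpr hkt]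
    calc (2 : ℝ) ^ min t k = 2 ^ k := by rw [min_eq_right hkt, rpow_natCast]
      _ ≤ (1 + t / k) ^ k := by gcongr

end Real

theorem abs_log_norm_one_sub_sub_log_norm_le {E : Type*} [NormedRing E] [NormOneClass E] {w : E}
    (hw : 2 ≤ ‖w‖) : |log ‖1 - w‖ - log ‖w‖| ≤ 2 / ‖w‖ := by
  have hclose : |‖1 - w‖ - ‖w‖| ≤ 1 := by
    simpa [norm_sub_rev] using abs_norm_sub_norm_le (w - 1) w
  have hlow : ‖w‖ / 2 ≤ min ‖1 - w‖ ‖w‖ :=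
    le_min (by linarith [(abs_le.mp hclose).1]) (by linarith)
  calc |log ‖1 - w‖ - log ‖w‖| ≤ |‖1 - w‖ - ‖w‖| / min ‖1 - w‖ ‖w‖ :=
        abs_log_sub_log_le_abs_sub_div_min (by linarith [(abs_le.mp hclose).1]) (by linarith)
    _ ≤ 1 / (‖w‖ / 2) := div_le_div₀ zero_le_one hclose (by linarith) hlow
    _ = 2 / ‖w‖ := one_div_div _ _

/-- For |z| = 1 + t/k with t ≥ 1, |log|1 - z^k| - k log|z|| ≤ C e^{-c min(t,k)}. -/
theorem stmt_2 : ∃ C > (0:ℝ), ∃ c > (0:ℝ), ∀ (k : ℕ), 0 < k → ∀ t : ℝ, 1 ≤ t →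
    ∀ z : ℂ, ‖z‖ = 1 + t / k →
      |Real.log ‖1 - z ^ k‖ - k * Real.log ‖z‖|
        ≤ C * Real.exp (-c * min t k) := by
  refine ⟨2, two_pos, log 2, log_pos one_lt_two, fun k hk t ht z hz => ?_⟩
  have hR : (2 : ℝ) ^ min t k ≤ ‖z ^ k‖ := by
    rw [norm_pow, hz]
    exact two_rpow_min_le_one_add_div_pow (by linarith) hk
  have h2 : (2 : ℝ) ≤ 2 ^ min t k :=
    self_le_rpow_of_one_le one_le_two (le_min ht (Nat.one_le_cast.mpr hk))
  have hexp : exp (-log 2 * min t k) = ((2 : ℝ) ^ min t k)⁻¹ := by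
    rw [neg_mul, exp_neg, rpow_def_of_pos two_pos]
  calc |log ‖1 - z ^ k‖ - k * log ‖z‖| = |log ‖1 - z ^ k‖ - log ‖z ^ k‖| := by
        rw [norm_pow, log_pow]
    _ ≤ 2 / ‖z ^ k‖ := abs_log_norm_one_sub_sub_log_norm_le (h2.trans hR)
    _ ≤ 2 / 2 ^ min t k := div_le_div_of_nonneg_left zero_le_two (by linarith) hR
    _ = 2 * exp (-log 2 * min t k) := by rw [hexp, div_eq_mul_inv]
end

section
/- For every δ > 0 there is a constant D(δ) such that: for every positive integer k and every complex z with 1 − 1/k < |z| < 1 + 1/k and dist(z, Λ_k) > δ/k, where Λ_k = {e^{2πij/k} : 0 ≤ j < k} is the set of k-th roots of unity, one has |log|1 − z^k|| ≤ D(δ). -/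
/-!
Write `z = ζ * (r * exp (θ * I))` with `ζ` the `k`-th root of unity nearest to `z`, so that
`|k * θ| ≤ π` and `z ^ k = r ^ k * exp (k * θ * I)`. Since `δ / k < ‖z - ζ‖ ≤ |r - 1| + |θ|`, either
`k * |1 - r| ≥ δ / 2`, and then `|1 - r ^ k|` is bounded below (Bernoulli for `r ≥ 1`,
`r ^ k ≤ exp (-k * (1 - r))` for `r < 1`), or `|k * θ| ≥ δ / 2`, and then
`‖1 - R * exp (φ * I)‖ ^ 2 = (1 - R) ^ 2 + 2 * R * (1 - cos φ)` is bounded below.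
The upper bound `‖1 - z ^ k‖ ≤ 1 + (1 + 1 / k) ^ k ≤ 1 + e` is immediate.
-/

open Real

lemma norm_one_sub_ofReal_mul_exp_sq (R φ : ℝ) :
    ‖1 - R * Complex.exp (φ * Complex.I)‖ ^ 2 = (1 - R) ^ 2 + 2 * R * (1 - cos φ) := by
  rw [Complex.sq_norm, Complex.normSq_apply]
  simp only [Complex.sub_re, Complex.sub_im, Complex.one_re, Complex.one_im, Complex.re_ofReal_mul,
    Complex.im_ofReal_mul, Complex.exp_ofReal_mul_I_re, Complex.exp_ofReal_mul_I_im]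
  linear_combination R ^ 2 * sin_sq_add_cos_sq φ

lemma div_one_add_le_abs_one_sub_pow {a r : ℝ} (k : ℕ) (ha : 0 ≤ a) (hr : 0 ≤ r)
    (h : a ≤ k * |1 - r|) : a / (1 + a) ≤ |1 - r ^ k| := by
  rcases le_or_gt 1 r with h1 | h1
  · rw [abs_of_nonpos (by linarith : 1 - r ≤ 0)] at h
    have hbern : 1 + k * (r - 1) ≤ r ^ k := by
      simpa using one_add_mul_le_pow (by linarith : (-2 : ℝ) ≤ r - 1) k
    calc a / (1 + a) ≤ a := div_le_self ha (by linarith)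
      _ ≤ r ^ k - 1 := by linarith
      _ ≤ |1 - r ^ k| := by rw [abs_sub_comm]; exact le_abs_self _
  · rw [abs_of_pos (sub_pos.2 h1)] at h
    -- `r ≤ exp (r - 1)` turns the gap `k * (1 - r) ≥ a` into `r ^ k ≤ exp (-a)`.
    have hrk : r ^ k ≤ exp (-a) :=
      calc r ^ k ≤ exp (r - 1) ^ k :=
            pow_le_pow_left₀ hr (by linarith [add_one_le_exp (r - 1)]) k
        _ = exp (-(k * (1 - r))) := by rw [← exp_nat_mul]; ring_nf
        _ ≤ exp (-a) := exp_le_exp.2 (by linarith)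
    have hexp : exp (-a) ≤ 1 / (1 + a) := by
      rw [exp_neg, one_div]
      exact inv_anti₀ (by linarith) (by linarith [add_one_le_exp a])
    calc a / (1 + a) = 1 - 1 / (1 + a) := by field_simp; ring
      _ ≤ 1 - r ^ k := by linarith
      _ ≤ |1 - r ^ k| := le_abs_self _

lemma min_le_norm_one_sub_ofReal_mul_exp {R φ a : ℝ} (hR : 0 ≤ R) (ha : 0 ≤ a)
    (hφ : |φ| ≤ π) (haφ : a ≤ |φ|) :
    min (1 / 2) (a / π) ≤ ‖1 - R * Complex.exp (φ * Complex.I)‖ := by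
  rcases le_or_gt R (1 / 2) with hR2 | hR2
  · refine (min_le_left _ _).trans ?_
    have h := norm_sub_norm_le (1 : ℂ) (R * Complex.exp (φ * Complex.I))
    rw [norm_one, norm_mul, Complex.norm_exp_ofReal_mul_I, Complex.norm_real, norm_of_nonneg hR,
      mul_one] at h
    linarith
  · refine (min_le_right _ _).trans (le_of_pow_le_pow_left₀ two_ne_zero (norm_nonneg _) ?_)
    have hcos := cos_le_one_sub_mul_cos_sq hφ
    have hφ2 : a ^ 2 ≤ φ ^ 2 := by rw [← sq_abs φ]; exact pow_le_pow_left₀ ha haφ 2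
    rw [norm_one_sub_ofReal_mul_exp_sq, div_pow]
    calc a ^ 2 / π ^ 2 ≤ 2 / π ^ 2 * φ ^ 2 := by
          rw [div_mul_eq_mul_div, div_le_div_iff_of_pos_right (by positivity)]
          linarith [sq_nonneg φ]
      _ ≤ 2 * R * (1 - cos φ) := by
          nlinarith [mul_nonneg (by linarith : 0 ≤ 2 * R - 1) (sub_nonneg.2 (cos_le_one φ))]
      _ ≤ (1 - R) ^ 2 + 2 * R * (1 - cos φ) := le_add_of_nonneg_left (sq_nonneg _)

lemma norm_exp_two_pi_I_mul_div (j k : ℕ) : ‖Complex.exp (2 * π * Complex.I * j / k)‖ = 1 := by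
  rw [show 2 * π * Complex.I * j / k = ((2 * π * j / k : ℝ) : ℂ) * Complex.I by push_cast; ring]
  exact Complex.norm_exp_ofReal_mul_I _

lemma exp_two_pi_I_mul_div_pow_self (j : ℕ) {k : ℕ} (hk : k ≠ 0) :
    Complex.exp (2 * π * Complex.I * j / k) ^ k = 1 := by
  rw [← Complex.exp_nat_mul, ← Complex.exp_nat_mul_two_pi_mul_I j]
  congr 1
  field_simp

lemma exists_eq_exp_two_pi_I_mul_div_mul_polar {k : ℕ} (hk : 0 < k) (z : ℂ) :
    ∃ j < k, ∃ θ : ℝ, |k * θ| ≤ π ∧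
      z = Complex.exp (2 * π * Complex.I * j / k) * (‖z‖ * Complex.exp (θ * Complex.I)) := by
  set n := round (k * Complex.arg z / (2 * π))
  have hk' : (0 : ℤ) < k := by exact_mod_cast hk
  have hkC : (k : ℂ) ≠ 0 := by exact_mod_cast hk.ne'
  have hj : (((n % k).toNat : ℕ) : ℤ) = n - k * (n / k) := by
    rw [Int.toNat_of_nonneg (Int.emod_nonneg n hk'.ne'), Int.emod_def]
  refine ⟨(n % k).toNat, by have := Int.emod_lt_of_pos n hk'; omega,
    Complex.arg z - 2 * π * n / k, ?_, ?_⟩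
  · have hround := abs_sub_round (k * Complex.arg z / (2 * π))
    calc |k * (Complex.arg z - 2 * π * n / k)|
        = 2 * π * |k * Complex.arg z / (2 * π) - n| := by
          rw [← abs_of_pos two_pi_pos, ← abs_mul, abs_of_pos two_pi_pos]
          congr 1; field_simp
      _ ≤ π := by nlinarith [pi_pos]
  · conv_lhs => rw [← Complex.norm_mul_exp_arg_mul_I z]
    rw [mul_left_comm, ← Complex.exp_add]
    congr 1
    refine Complex.exp_eq_exp_iff_exists_int.2 ⟨n / k, ?_⟩
    have hjC : (((n % k).toNat : ℕ) : ℂ) = n - k * (n / k : ℤ) := by exact_mod_cast hj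
    rw [hjC]
    push_cast
    field_simp
    ring

lemma min_le_norm_one_sub_pow_of_lt_norm_sub_one {δ r θ : ℝ} {k : ℕ} (hk : 0 < k) (hδ : 0 ≤ δ)
    (hr : 0 ≤ r) (hθ : |k * θ| ≤ π) (hfar : δ / k < ‖r * Complex.exp (θ * Complex.I) - 1‖) :
    min (δ / (2 + δ)) (min (1 / 2) (δ / 2 / π)) ≤
      ‖1 - (r * Complex.exp (θ * Complex.I)) ^ k‖ := by
  have hkR : (0 : ℝ) < k := by exact_mod_cast hk
  have hsplit : ‖r * Complex.exp (θ * Complex.I) - 1‖ ≤ |r - 1| + |θ| := by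
    have h := norm_exp_I_mul_ofReal_sub_one_le (x := θ)
    rw [mul_comm, norm_eq_abs] at h
    calc ‖r * Complex.exp (θ * Complex.I) - 1‖
        = ‖((r - 1 : ℝ) : ℂ) * Complex.exp (θ * Complex.I) + (Complex.exp (θ * Complex.I) - 1)‖ := by
          push_cast; ring_nf
      _ ≤ |r - 1| + |θ| := by
          refine (norm_add_le _ _).trans (add_le_add ?_ h)
          rw [norm_mul, Complex.norm_exp_ofReal_mul_I, Complex.norm_real, norm_eq_abs, mul_one]
  have hfar' : δ < k * |r - 1| + |k * θ| := by
    rw [div_lt_iff₀ hkR] at hfar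
    have h := mul_le_mul_of_nonneg_right hsplit hkR.le
    rw [abs_mul, Nat.abs_cast]
    linarith
  rcases le_or_gt (δ / 2) (k * |r - 1|) with hrad | hang
  · rw [abs_sub_comm] at hrad
    refine (min_le_left _ _).trans ?_
    have h := abs_norm_sub_norm_le (1 : ℂ) ((r * Complex.exp (θ * Complex.I)) ^ k)
    rw [norm_one, norm_pow, norm_mul, Complex.norm_exp_ofReal_mul_I, Complex.norm_real,
      norm_of_nonneg hr, mul_one] at h
    calc δ / (2 + δ) = δ / 2 / (1 + δ / 2) := by field_simp
      _ ≤ |1 - r ^ k| := div_one_add_le_abs_one_sub_pow k (by positivity) hr hrad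
      _ ≤ _ := h
  · refine (min_le_right _ _).trans ?_
    have hpow : (r * Complex.exp (θ * Complex.I)) ^ k
        = ((r ^ k : ℝ) : ℂ) * Complex.exp ((k * θ : ℝ) * Complex.I) := by
      rw [mul_pow, ← Complex.exp_nat_mul]; push_cast; ring_nf
    rw [hpow]
    exact min_le_norm_one_sub_ofReal_mul_exp (by positivity) (by positivity) hθ (by linarith)

lemma norm_one_sub_pow_le {k : ℕ} {z : ℂ} (hz : ‖z‖ ≤ 1 + 1 / k) :
    ‖1 - z ^ k‖ ≤ 1 + exp 1 := by
  have hzk : ‖z‖ ^ k ≤ exp 1 :=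
    calc ‖z‖ ^ k ≤ exp (1 / k) ^ k :=
          pow_le_pow_left₀ (norm_nonneg z) (hz.trans (by linarith [add_one_le_exp (1 / k : ℝ)])) k
      _ = exp (k * (1 / k)) := by rw [← exp_nat_mul]
      _ ≤ exp 1 := exp_le_exp.2 (by rw [mul_one_div]; exact div_self_le_one _)
  calc ‖1 - z ^ k‖ ≤ ‖(1 : ℂ)‖ + ‖z ^ k‖ := norm_sub_le _ _
    _ ≤ 1 + exp 1 := by rw [norm_one, norm_pow]; linarith

/-- Away from the k-th roots of unity, in the annulus 1 - 1/k < |z| < 1 + 1/k,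
|log|1 - z^k|| is bounded by a constant depending only on δ. -/
theorem stmt_3 : ∀ δ > (0:ℝ), ∃ D : ℝ, ∀ (k : ℕ), 0 < k → ∀ z : ℂ,
    1 - 1 / k < ‖z‖ → ‖z‖ < 1 + 1 / k →
    (∀ j < k, δ / k < ‖z - Complex.exp (2 * π * Complex.I * j / k)‖) →
      |Real.log ‖1 - z ^ k‖| ≤ D := by
  intro δ hδ
  set c := min (δ / (2 + δ)) (min (1 / 2) (δ / 2 / π))
  have hc : 0 < c := by positivity
  refine ⟨max |log c| |log (1 + exp 1)|, fun k hk z _ hz hfar ↦ ?_⟩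
  obtain ⟨j, hj, θ, hθ, hzj⟩ := exists_eq_exp_two_pi_I_mul_div_mul_polar hk z
  have hdist : δ / k < ‖‖z‖ * Complex.exp (θ * Complex.I) - 1‖ := by
    have h := hfar j hj
    nth_rewrite 1 [hzj] at h
    rwa [← mul_sub_one, norm_mul, norm_exp_two_pi_I_mul_div, one_mul] at h
  have hlower : c ≤ ‖1 - z ^ k‖ := by
    rw [hzj, mul_pow, exp_two_pi_I_mul_div_pow_self j hk.ne', one_mul]
    exact min_le_norm_one_sub_pow_of_lt_norm_sub_one hk hδ.le (norm_nonneg z) hθ hdist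
  exact abs_le_max_abs_abs (log_le_log hc hlower)
    (log_le_log (hc.trans_le hlower) (norm_one_sub_pow_le hz.le))
end

section
/- Let {R_n} satisfy R₁ ≥ 2, R_{n+1} ≥ R_n², and define E(z) = ∏_{n≥1}(1 − (z/R_n)ⁿ). Define h(z) via ψ(t) = t + 2Σ_{s≤n} s(t − log R_s) + n·min(t − log R_n, log R_{n+1} − t) for log R_n ≤ t ≤ log R_{n+1}, and h(z) = ψ(log|z|). Then |E'(λ)| ≍ e^{h(R_n)/2}·n·R_n^{−3/2} for every zero λ of E with |λ| = R_n, with implied constants independent of n and λ. -/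
open Real Filter Finset
open scoped Topology

/-!
At `‖z‖ = R n` lacunarity makes every factor `1 - (z / R m) ^ m` with `m ≠ n` comparable, up
to `1 ± 2⁻ᵐ`, to its dominant term: `(R n / R m) ^ m` for `m < n` and `1` for `m > n`. Hence the
product of all factors but the `n`-th is `Qₙ = ∏_{m<n} (R n / R m) ^ m` (`dominantProduct R n`)
up to the constants `e⁻²` and `e`. A zero on that circle is therefore a zero of the `n`-th
factor, at which the derivative of the product is `n / R n` times the other factors, so
`|E'(λ)| ≍ n Qₙ / R n`. Finally `h (R n) / 2 = ½ log R n + log Qₙ`, i.e.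
`e^{h(R n)/2} = R n ^ ½ Qₙ`.
-/

lemma exp_neg_two_mul_le_one_sub {x : ℝ} (hx0 : 0 ≤ x) (hx : x ≤ 1 / 2) :
    exp (-(2 * x)) ≤ 1 - x := by
  have h : 1 + 2 * x ≤ exp (2 * x) := by linarith [add_one_le_exp (2 * x)]
  rw [exp_neg, inv_le_iff_one_le_mul₀ (exp_pos _)]
  nlinarith

lemma exp_neg_two_mul_sum_le_prod_one_sub {ι : Type*} (s : Finset ι) {f : ι → ℝ}
    (hf0 : ∀ i ∈ s, 0 ≤ f i) (hf : ∀ i ∈ s, f i ≤ 1 / 2) :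
    exp (-(2 * ∑ i ∈ s, f i)) ≤ ∏ i ∈ s, (1 - f i) := by
  rw [mul_sum, ← sum_neg_distrib, exp_sum]
  exact prod_le_prod (fun _ _ => (exp_pos _).le) fun i hi =>
    exp_neg_two_mul_le_one_sub (hf0 i hi) (hf i hi)

lemma sum_half_pow_le_one {s : Finset ℕ} (hs : 0 ∉ s) : ∑ m ∈ s, (1 / 2 : ℝ) ^ m ≤ 1 := by
  have hsub : s ⊆ Ico 1 (s.sup id + 1) := fun m hm =>
    mem_Ico.2 ⟨Nat.one_le_iff_ne_zero.2 (ne_of_mem_of_not_mem hm hs),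
      Nat.lt_succ_of_le (le_sup (f := id) hm)⟩
  calc ∑ m ∈ s, (1 / 2 : ℝ) ^ m ≤ ∑ m ∈ Ico 1 (s.sup id + 1), (1 / 2 : ℝ) ^ m :=
        sum_le_sum_of_subset_of_nonneg hsub fun _ _ _ => by positivity
    _ = 1 - 2 * (1 / 2) ^ (s.sup id + 1) := by
        rw [geom_sum_Ico (by norm_num) (by omega)]; ring
    _ ≤ 1 := by linarith [pow_pos (by norm_num : (0 : ℝ) < 1 / 2) (s.sup id + 1)]

lemma prod_bounds_of_half_pow_bounds {s : Finset ℕ} (hs : 0 ∉ s) {a g : ℕ → ℝ}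
    (hg : ∀ m ∈ s, 0 ≤ g m)
    (ha : ∀ m ∈ s, g m * (1 - (1 / 2) ^ m) ≤ a m ∧ a m ≤ g m * (1 + (1 / 2) ^ m)) :
    exp (-2) * ∏ m ∈ s, g m ≤ ∏ m ∈ s, a m ∧ ∏ m ∈ s, a m ≤ exp 1 * ∏ m ∈ s, g m := by
  have hsum := sum_half_pow_le_one hs
  have hhalf : ∀ m ∈ s, (1 / 2 : ℝ) ^ m ≤ 1 / 2 := fun m hm =>
    pow_le_of_le_one (by norm_num) (by norm_num) (ne_of_mem_of_not_mem hm hs)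
  have hlow : ∀ m ∈ s, 0 ≤ g m * (1 - (1 / 2) ^ m) := fun m hm =>
    mul_nonneg (hg m hm) (by linarith [hhalf m hm])
  constructor
  · calc exp (-2) * ∏ m ∈ s, g m
          ≤ (∏ m ∈ s, (1 - (1 / 2 : ℝ) ^ m)) * ∏ m ∈ s, g m := by
          gcongr
          · exact prod_nonneg hg
          · exact (exp_le_exp.2 (by linarith)).trans
              (exp_neg_two_mul_sum_le_prod_one_sub s (fun _ _ => by positivity) hhalf)
      _ = ∏ m ∈ s, g m * (1 - (1 / 2) ^ m) := by rw [mul_comm, prod_mul_distrib]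
      _ ≤ ∏ m ∈ s, a m := prod_le_prod hlow fun m hm => (ha m hm).1
  · calc ∏ m ∈ s, a m
          ≤ ∏ m ∈ s, g m * (1 + (1 / 2) ^ m) :=
          prod_le_prod (fun m hm => (hlow m hm).trans (ha m hm).1) fun m hm => (ha m hm).2
      _ = (∏ m ∈ s, (1 + (1 / 2 : ℝ) ^ m)) * ∏ m ∈ s, g m := by rw [mul_comm, prod_mul_distrib]
      _ ≤ exp 1 * ∏ m ∈ s, g m := by
          gcongr
          · exact prod_nonneg hg
          · exact (prod_one_add_le_exp_sum s fun _ => by positivity).trans (exp_le_exp.2 hsum)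

lemma norm_one_sub_bounds_of_norm_le {A : Type*} [SeminormedRing A] [NormOneClass A] {w : A}
    {ε : ℝ} (hw : ‖w‖ ≤ ε) : 1 - ε ≤ ‖1 - w‖ ∧ ‖1 - w‖ ≤ 1 + ε := by
  have h₁ := norm_sub_norm_le (1 : A) w
  have h₂ := norm_sub_le (1 : A) w
  rw [norm_one] at h₁ h₂
  constructor <;> linarith

lemma norm_one_sub_bounds_of_one_le_mul_norm {A : Type*} [SeminormedRing A] [NormOneClass A]
    {w : A} {ε : ℝ} (hw : 1 ≤ ε * ‖w‖) :
    ‖w‖ * (1 - ε) ≤ ‖1 - w‖ ∧ ‖1 - w‖ ≤ ‖w‖ * (1 + ε) := by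
  have h₁ := norm_sub_norm_le w (1 : A)
  have h₂ := norm_sub_le (1 : A) w
  rw [norm_one, norm_sub_rev] at h₁
  rw [norm_one] at h₂
  constructor <;> linarith

theorem HasDerivAt.fun_finsetProd_of_eq_zero {𝕜 ι 𝔸 : Type*} [NontriviallyNormedField 𝕜]
    [DecidableEq ι] [NormedCommRing 𝔸] [NormedAlgebra 𝕜 𝔸] {u : Finset ι} {f : ι → 𝕜 → 𝔸}
    {f' : ι → 𝔸} {x : 𝕜} (hf : ∀ i ∈ u, HasDerivAt (f i) (f' i) x) {j : ι} (hj : j ∈ u)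
    (hfj : f j x = 0) :
    HasDerivAt (∏ i ∈ u, f i ·) ((∏ i ∈ u.erase j, f i x) • f' j) x := by
  convert HasDerivAt.fun_finsetProd hf using 1
  refine (sum_eq_single_of_mem (f := fun i => (∏ k ∈ u.erase i, f k x) • f' i) j hj
    fun i _ hij => ?_).symm
  rw [prod_eq_zero (mem_erase.2 ⟨Ne.symm hij, hj⟩) hfj, zero_smul]

lemma hasDerivAt_one_sub_div_pow (r x : ℂ) (m : ℕ) :
    HasDerivAt (fun z : ℂ => 1 - (z / r) ^ m) (-(m * (x / r) ^ (m - 1) * (1 / r))) x := by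
  have h : HasDerivAt (fun z : ℂ => z / r) (1 / r) x := by
    simpa using (hasDerivAt_id x).div_const r
  exact (h.pow m).const_sub 1

lemma TendstoLocallyUniformly.tendsto_deriv {ι : Type*} {l : Filter ι} {F : ι → ℂ → ℂ}
    {f : ℂ → ℂ} (hF : TendstoLocallyUniformly F f l) (hd : ∀ᶠ i in l, Differentiable ℂ (F i))
    (z : ℂ) : Tendsto (fun i => deriv (F i) z) l (𝓝 (deriv f z)) :=
  ((tendstoLocallyUniformlyOn_univ.2 hF).deriv (hd.mono fun _ h => h.differentiableOn)
    isOpen_univ).tendsto_at (Set.mem_univ z)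

lemma norm_deriv_prod_one_sub_div_pow {R : ℕ → ℝ} {n N : ℕ} (hn : 1 ≤ n) (hN : n ≤ N) {z : ℂ}
    (hzn : (z / R n) ^ n = 1) :
    ‖deriv (fun z : ℂ => ∏ m ∈ Icc 1 N, (1 - (z / (R m : ℂ)) ^ m)) z‖ =
      n / |R n| * ∏ m ∈ (Icc 1 N).erase n, ‖1 - (z / R m) ^ m‖ := by
  have hd := HasDerivAt.fun_finsetProd_of_eq_zero
    (fun m _ => hasDerivAt_one_sub_div_pow (R m) z m) (mem_Icc.2 ⟨hn, hN⟩) (by simp [hzn])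
  have hunit : ‖z / R n‖ = 1 := Complex.norm_eq_one_of_pow_eq_one hzn (by omega)
  rw [hd.deriv, smul_eq_mul, norm_mul, norm_prod, mul_comm, norm_neg, norm_mul, norm_mul,
    norm_pow, hunit, one_pow, mul_one, norm_div, norm_one, Complex.norm_natCast, Complex.norm_real,
    Real.norm_eq_abs, mul_one_div]

structure IsLacunary (R : ℕ → ℝ) : Prop where
  two_le_one : 2 ≤ R 1
  sq_le_succ : ∀ n ≥ 1, R n ^ 2 ≤ R (n + 1)

noncomputable def dominantProduct (R : ℕ → ℝ) (n : ℕ) : ℝ := ∏ m ∈ Ico 1 n, (R n / R m) ^ m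

namespace IsLacunary

variable {R : ℕ → ℝ}

lemma two_le (hR : IsLacunary R) {m : ℕ} (hm : 1 ≤ m) : 2 ≤ R m := by
  induction m, hm using Nat.le_induction with
  | base => exact hR.two_le_one
  | succ k hk ih => nlinarith [hR.sq_le_succ k hk]

lemma pos (hR : IsLacunary R) {m : ℕ} (hm : 1 ≤ m) : 0 < R m :=
  two_pos.trans_le (hR.two_le hm)

lemma le_succ (hR : IsLacunary R) {m : ℕ} (hm : 1 ≤ m) : R m ≤ R (m + 1) := by
  nlinarith [hR.sq_le_succ m hm, hR.two_le hm]

lemma le_of_le (hR : IsLacunary R) {m k : ℕ} (hm : 1 ≤ m) (hmk : m ≤ k) : R m ≤ R k := by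
  induction k, hmk using Nat.le_induction with
  | base => exact le_rfl
  | succ k hk ih => exact ih.trans (hR.le_succ (hm.trans hk))

lemma two_mul_le (hR : IsLacunary R) {m k : ℕ} (hm : 1 ≤ m) (hmk : m < k) : 2 * R m ≤ R k :=
  calc 2 * R m ≤ R m ^ 2 := by nlinarith [hR.two_le hm]
    _ ≤ R (m + 1) := hR.sq_le_succ m hm
    _ ≤ R k := hR.le_of_le (by omega) hmk

lemma dominantProduct_pos (hR : IsLacunary R) (n : ℕ) : 0 < dominantProduct R n :=
  prod_pos fun m hm => pow_pos (div_pos (hR.pos (by have := mem_Ico.1 hm; omega))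
    (hR.pos (mem_Ico.1 hm).1)) m

lemma norm_one_sub_div_pow_bounds (hR : IsLacunary R) {n m : ℕ} (hn : 1 ≤ n) (hm : 1 ≤ m)
    (hmn : m ≠ n) {z : ℂ} (hz : ‖z‖ = R n) :
    (if m < n then (R n / R m) ^ m else 1) * (1 - (1 / 2) ^ m) ≤ ‖1 - (z / R m) ^ m‖ ∧
      ‖1 - (z / R m) ^ m‖ ≤ (if m < n then (R n / R m) ^ m else 1) * (1 + (1 / 2) ^ m) := by
  have hRm := hR.pos hm
  have hw : ‖(z / R m) ^ m‖ = (R n / R m) ^ m := by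
    rw [norm_pow, norm_div, hz, Complex.norm_real, norm_of_nonneg hRm.le]
  rcases hmn.lt_or_gt with hlt | hgt
  · rw [if_pos hlt, ← hw]
    refine norm_one_sub_bounds_of_one_le_mul_norm ?_
    rw [hw, ← mul_pow]
    refine one_le_pow₀ ?_
    rw [mul_div_assoc', le_div_iff₀ hRm]
    linarith [hR.two_mul_le hm hlt]
  · rw [if_neg (by omega), one_mul, one_mul]
    refine norm_one_sub_bounds_of_norm_le ?_
    rw [hw]
    refine pow_le_pow_left₀ (div_nonneg (hR.pos hn).le hRm.le) ?_ m
    rw [div_le_iff₀ hRm]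
    linarith [hR.two_mul_le hn hgt]

lemma prod_erase_norm_bounds (hR : IsLacunary R) {n N : ℕ} (hn : 1 ≤ n) (hN : n ≤ N) {z : ℂ}
    (hz : ‖z‖ = R n) :
    exp (-2) * dominantProduct R n ≤ ∏ m ∈ (Icc 1 N).erase n, ‖1 - (z / R m) ^ m‖ ∧
      ∏ m ∈ (Icc 1 N).erase n, ‖1 - (z / R m) ^ m‖ ≤ exp 1 * dominantProduct R n := by
  have hdom : ∏ m ∈ (Icc 1 N).erase n, (if m < n then (R n / R m) ^ m else 1) =
      dominantProduct R n := by
    rw [← prod_filter, dominantProduct]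
    congr 1
    ext m
    simp only [mem_filter, mem_erase, mem_Icc, mem_Ico]
    omega
  rw [← hdom]
  refine prod_bounds_of_half_pow_bounds (by simp) (fun m hm => ?_) fun m hm => ?_
  · split_ifs with hlt
    · exact pow_nonneg (div_nonneg (hR.pos hn).le (hR.pos (mem_Icc.1 (mem_of_mem_erase hm)).1).le) m
    · exact zero_le_one
  · obtain ⟨hmn, hm⟩ := mem_erase.1 hm
    exact hR.norm_one_sub_div_pow_bounds hn (mem_Icc.1 hm).1 hmn hz

lemma div_pow_eq_one_of_eq_zero (hR : IsLacunary R) {E : ℂ → ℂ}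
    (hE : TendstoLocallyUniformly
      (fun N : ℕ => fun z : ℂ => ∏ n ∈ Icc 1 N, (1 - (z / (R n : ℂ)) ^ n)) E atTop)
    {n : ℕ} (hn : 1 ≤ n) {z : ℂ} (hz : ‖z‖ = R n) (hEz : E z = 0) : (z / R n) ^ n = 1 := by
  have hlim : Tendsto (fun N => ∏ m ∈ Icc 1 N, ‖1 - (z / R m) ^ m‖) atTop (𝓝 0) := by
    simpa only [hEz, norm_zero, norm_prod] using
      ((tendstoLocallyUniformlyOn_univ.2 hE).tendsto_at (Set.mem_univ z)).norm
  have hle : ‖1 - (z / R n) ^ n‖ * (exp (-2) * dominantProduct R n) ≤ 0 := by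
    refine ge_of_tendsto hlim (eventually_atTop.2 ⟨n, fun N hN => ?_⟩)
    rw [← mul_prod_erase _ _ (mem_Icc.2 ⟨hn, hN⟩)]
    exact mul_le_mul_of_nonneg_left (hR.prod_erase_norm_bounds hn hN hz).1 (norm_nonneg _)
  have hpos : 0 < exp (-2) * dominantProduct R n := mul_pos (exp_pos _) (hR.dominantProduct_pos n)
  have hzero : ‖1 - (z / R n) ^ n‖ = 0 :=
    le_antisymm (nonpos_of_mul_nonpos_left hle hpos) (norm_nonneg _)
  exact (sub_eq_zero.1 (norm_eq_zero.1 hzero)).symm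

lemma norm_deriv_bounds (hR : IsLacunary R) {E : ℂ → ℂ}
    (hE : TendstoLocallyUniformly
      (fun N : ℕ => fun z : ℂ => ∏ n ∈ Icc 1 N, (1 - (z / (R n : ℂ)) ^ n)) E atTop)
    {n : ℕ} (hn : 1 ≤ n) {z : ℂ} (hz : ‖z‖ = R n) (hEz : E z = 0) :
    exp (-2) * (dominantProduct R n * n / R n) ≤ ‖deriv E z‖ ∧
      ‖deriv E z‖ ≤ exp 1 * (dominantProduct R n * n / R n) := by
  have hRn := hR.pos hn
  have hdiff : ∀ N, Differentiable ℂ fun z : ℂ => ∏ m ∈ Icc 1 N, (1 - (z / (R m : ℂ)) ^ m) :=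
    fun N w =>
      (HasDerivAt.fun_finsetProd fun m _ => hasDerivAt_one_sub_div_pow (R m) w m).differentiableAt
  have hlim := (hE.tendsto_deriv (Eventually.of_forall hdiff) z).norm
  have hderiv := fun N (hN : n ≤ N) => norm_deriv_prod_one_sub_div_pow (R := R) hn hN
    (hR.div_pow_eq_one_of_eq_zero hE hn hz hEz)
  simp only [abs_of_pos hRn] at hderiv
  have hfactor : ∀ c : ℝ,
      c * (dominantProduct R n * n / R n) = n / R n * (c * dominantProduct R n) := fun c => by ring
  rw [hfactor, hfactor]
  constructor
  · refine ge_of_tendsto hlim (eventually_atTop.2 ⟨n, fun N hN => ?_⟩)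
    rw [hderiv N hN]
    exact mul_le_mul_of_nonneg_left (hR.prod_erase_norm_bounds hn hN hz).1 (by positivity)
  · refine le_of_tendsto hlim (eventually_atTop.2 ⟨n, fun N hN => ?_⟩)
    rw [hderiv N hN]
    exact mul_le_mul_of_nonneg_left (hR.prod_erase_norm_bounds hn hN hz).2 (by positivity)

lemma exp_half_eq (hR : IsLacunary R) {h : ℂ → ℝ} {n : ℕ} (hn : 1 ≤ n)
    (hh : ∀ z : ℂ, R n ≤ ‖z‖ → ‖z‖ ≤ R (n + 1) →
      h z = Real.log (‖z‖)
        + 2 * ∑ s ∈ Icc 1 n, (s : ℝ) * (Real.log (‖z‖) - Real.log (R s))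
        + n * min (Real.log (‖z‖) - Real.log (R n))
            (Real.log (R (n + 1)) - Real.log (‖z‖))) :
    exp (h (R n) / 2) = R n ^ (1 / 2 : ℝ) * dominantProduct R n := by
  have hRn := hR.pos hn
  have hnorm : ‖(R n : ℂ)‖ = R n := by rw [Complex.norm_real, norm_of_nonneg hRn.le]
  have hmin : min (log (R n) - log (R n)) (log (R (n + 1)) - log (R n)) = 0 := by
    rw [sub_self]
    exact min_eq_left (sub_nonneg.2 (log_le_log hRn (hR.le_succ hn)))
  rw [hh (R n) hnorm.ge (hnorm.trans_le (hR.le_succ hn)), hnorm, hmin, mul_zero, add_zero,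
    Icc_eq_cons_Ico hn, sum_cons, sub_self, mul_zero, zero_add,
    show ∀ a b : ℝ, (a + 2 * b) / 2 = a * (1 / 2) + b by intros; ring, exp_add, exp_sum,
    rpow_def_of_pos hRn]
  congr 1
  refine prod_congr rfl fun s hs => ?_
  have hRs := hR.pos (mem_Ico.1 hs).1
  rw [← log_div hRn.ne' hRs.ne', exp_nat_mul, exp_log (div_pos hRn hRs)]

end IsLacunary

/-- With the piecewise weight h associated to the lacunary product E, one has
|E'(λ)| ≍ e^{h(Rₙ)/2} · n · Rₙ^{−3/2} at every zero λ of E with |λ| = Rₙ. -/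
theorem stmt_10 (R : ℕ → ℝ) (hR1 : 2 ≤ R 1) (hR : ∀ n ≥ 1, (R n) ^ 2 ≤ R (n + 1))
    (E : ℂ → ℂ)
    (hE : TendstoLocallyUniformly
      (fun N : ℕ => fun z : ℂ => ∏ n ∈ Icc 1 N, (1 - (z / (R n : ℂ)) ^ n)) E atTop)
    (h : ℂ → ℝ)
    (hh : ∀ n : ℕ, 1 ≤ n → ∀ z : ℂ,
      R n ≤ ‖z‖ → ‖z‖ ≤ R (n + 1) →
      h z = Real.log (‖z‖)
        + 2 * ∑ s ∈ Icc 1 n, (s : ℝ) * (Real.log (‖z‖) - Real.log (R s))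
        + n * min (Real.log (‖z‖) - Real.log (R n))
            (Real.log (R (n + 1)) - Real.log (‖z‖))) :
    ∃ c > (0:ℝ), ∃ C > (0:ℝ), ∀ n : ℕ, 1 ≤ n → ∀ lam : ℂ,
      E lam = 0 → ‖lam‖ = R n →
      c * Real.exp (h (R n : ℂ) / 2) * n / (R n) ^ ((3:ℝ)/2)
          ≤ ‖deriv E lam‖ ∧
      ‖deriv E lam‖
          ≤ C * Real.exp (h (R n : ℂ) / 2) * n / (R n) ^ ((3:ℝ)/2) := by
  have hRl : IsLacunary R := ⟨hR1, hR⟩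
  refine ⟨exp (-2), exp_pos _, exp 1, exp_pos _, fun n hn lam hEl hlam => ?_⟩
  have hRn := hRl.pos hn
  have hscale : ∀ c : ℝ, c * exp (h (R n) / 2) * n / R n ^ (3 / 2 : ℝ) =
      c * (dominantProduct R n * n / R n) := fun c => by
    rw [hRl.exp_half_eq hn (hh n hn), show (3 / 2 : ℝ) = 1 / 2 + 1 by norm_num, rpow_add hRn,
      rpow_one]
    field_simp
  rw [hscale, hscale]
  exact hRl.norm_deriv_bounds hE hn hlam hEl
end

section
/- Let {R_n} satisfy R₁ ≥ 2, R_{n+1} ≥ R_n², let E(z) = ∏_{n≥1}(1 − (z/R_n)ⁿ), and let h be the associated weight with |E(z)|² e^{−h(z)} ≍ n² dist²(z, Λ)/R_n³ on the annulus ||z| − R_n| ≤ R_n/n, where Λ = Z(E). Then for every entire function F ≢ 0, ∫_ℂ |F(z)|² |E(z)|² e^{−h(z)} dm(z) = ∞; in particular F·E ∉ F_h. -/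
/-!
Fix `z₀` with `F z₀ ≠ 0`. On the annulus `Rₙ(1 + 1/(4n)) ≤ |w| ≤ 2Rₙ` every partial product of `E`
has modulus at least `1/8`: the factors with `m < n` have modulus `≥ 1`, the `n`-th one `≥ 1/4` by
Bernoulli's inequality, and since `Rₘ` grows at least like `2^m Rₙ²` the later ones multiply to
`≥ 1/2`. Hence the thinner annulus `Rₙ(1 + 1/(2n)) ≤ |z| ≤ Rₙ(1 + 3/(4n))` keeps distance
`Rₙ/(4n)` from `Z(E)`, and there the lower comparison gives `|E|² e^{-h} ≥ c/(16 Rₙ)`. Once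
`Rₙ/n ≫ |z₀|`, an annulus centred at `z₀` of width `≥ Rₙ/(8n)` fits inside it, and the mean value
property of `F²` on circles about `z₀` gives `∫ |F|² ≥ |F z₀|² · area ≥ |F z₀|² Rₙ²/(4n)` over it.
So the weighted integral is at least a constant times `Rₙ/n ≥ n`, for every large `n`.
-/

open Real Filter Finset MeasureTheory

open scoped ENNReal

lemma polarCoord_symm_eq_circleMap (p : ℝ × ℝ) :
    Complex.polarCoord.symm p = circleMap 0 p.1 p.2 := by
  rw [Complex.polarCoord_symm_apply, circleMap, Complex.exp_mul_I]
  push_cast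
  ring

lemma lintegral_eq_lintegral_polar {f : ℂ → ℝ≥0∞} (hf : Measurable f) :
    ∫⁻ z, f z = ∫⁻ r in Set.Ioi 0, ENNReal.ofReal r *
      ∫⁻ θ in Set.Ioo (-π) π, f (circleMap 0 r θ) := by
  have hmeas : Measurable fun p : ℝ × ℝ => ENNReal.ofReal p.1 * f (circleMap 0 p.1 p.2) := by
    refine (ENNReal.measurable_ofReal.comp measurable_fst).mul (hf.comp ?_)
    exact (by fun_prop : Continuous fun p : ℝ × ℝ => circleMap 0 p.1 p.2).measurable
  rw [← Complex.lintegral_comp_polarCoord_symm, polarCoord_target, Measure.volume_eq_prod,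
    ← Measure.prod_restrict]
  simp only [polarCoord_symm_eq_circleMap, smul_eq_mul]
  rw [lintegral_prod _ hmeas.aemeasurable]
  refine lintegral_congr fun r => ?_
  dsimp only
  rw [lintegral_const_mul]
  exact hf.comp (continuous_circleMap 0 r).measurable

def annulus (c : ℂ) (r₁ r₂ : ℝ) : Set ℂ := {z | ‖z - c‖ ∈ Set.Ioo r₁ r₂}

lemma measurableSet_annulus (c : ℂ) (r₁ r₂ : ℝ) : MeasurableSet (annulus c r₁ r₂) :=
  measurableSet_Ioo.preimage (by fun_prop)

lemma setLIntegral_annulus_eq {f : ℂ → ℝ≥0∞} (hf : Measurable f) (c : ℂ) {r₁ r₂ : ℝ}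
    (hr₁ : 0 ≤ r₁) :
    ∫⁻ z in annulus c r₁ r₂, f z = ∫⁻ r in Set.Ioo r₁ r₂, ENNReal.ofReal r *
      ∫⁻ θ in Set.Ioo (-π) π, f (circleMap c r θ) := by
  have hmem : ∀ r θ, 0 < r → (circleMap 0 r θ + c ∈ annulus c r₁ r₂ ↔ r ∈ Set.Ioo r₁ r₂) := by
    intro r θ hr
    simp [annulus, abs_of_pos hr]
  rw [← lintegral_indicator (measurableSet_annulus c r₁ r₂),
    ← lintegral_add_right_eq_self _ c,
    lintegral_eq_lintegral_polar (f := fun z => (annulus c r₁ r₂).indicator f (z + c))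
      ((hf.indicator (measurableSet_annulus c r₁ r₂)).comp
      (measurable_add_const c)),
    ← lintegral_indicator measurableSet_Ioo, ← lintegral_indicator measurableSet_Ioi]
  refine lintegral_congr fun r => ?_
  by_cases hr : r ∈ Set.Ioo r₁ r₂
  · have hr0 : 0 < r := hr₁.trans_lt hr.1
    simp only [Set.indicator_of_mem hr, Set.indicator_of_mem (Set.mem_Ioi.2 hr0)]
    congr 1
    refine lintegral_congr fun θ => ?_
    simp only [Set.indicator_of_mem ((hmem r θ hr0).2 hr)]
    rw [← circleMap_sub_center c r θ, sub_add_cancel]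
  · rw [Set.indicator_of_notMem hr]
    by_cases hr0 : r ∈ Set.Ioi 0
    · rw [Set.indicator_of_mem hr0]
      simp [Set.indicator_of_notMem (fun h => hr ((hmem r _ hr0).1 h))]
    · exact Set.indicator_of_notMem hr0 _

lemma setLIntegral_Ioo_ofReal {r₁ r₂ : ℝ} (hr₁ : 0 ≤ r₁) (hr : r₁ ≤ r₂) :
    ∫⁻ r in Set.Ioo r₁ r₂, ENNReal.ofReal r = ENNReal.ofReal ((r₂ ^ 2 - r₁ ^ 2) / 2) := by
  rw [← ofReal_integral_eq_lintegral_ofReal (f := fun r => r)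
      (continuous_id.integrableOn_Icc.mono_set Set.Ioo_subset_Icc_self)
      (ae_restrict_of_forall_mem measurableSet_Ioo fun r hr => hr₁.trans hr.1.le),
    ← integral_Ioc_eq_integral_Ioo, ← intervalIntegral.integral_of_le hr, integral_id]

section MeanValue

variable {V : Type*} [NormedAddCommGroup V] [NormedSpace ℂ V] [CompleteSpace V]

lemma norm_le_circleAverage_norm {G : ℂ → V} (hG : Differentiable ℂ G) (c : ℂ) (r : ℝ) :
    ‖G c‖ ≤ circleAverage (fun z => ‖G z‖) c r := by
  rw [← hG.diffContOnCl.circleAverage (c := c) (R := r), circleAverage_def, circleAverage_def,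
    norm_smul, Real.norm_of_nonneg (by positivity), smul_eq_mul]
  gcongr
  exact intervalIntegral.norm_integral_le_integral_norm (by positivity)

lemma ofReal_two_pi_mul_norm_le_setLIntegral_circleMap {G : ℂ → V} (hG : Differentiable ℂ G)
    (c : ℂ) (r : ℝ) :
    ENNReal.ofReal (2 * π * ‖G c‖) ≤
      ∫⁻ θ in Set.Ioo (-π) π, ENNReal.ofReal ‖G (circleMap c r θ)‖ := by
  have hcont : Continuous fun θ => ‖G (circleMap c r θ)‖ := by
    have := hG.continuous; fun_prop
  rw [← ofReal_integral_eq_lintegral_ofReal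
    (hcont.integrableOn_Icc.mono_set Set.Ioo_subset_Icc_self)
    (Eventually.of_forall fun _ => norm_nonneg _)]
  refine ENNReal.ofReal_le_ofReal ?_
  have hper : Function.Periodic (fun θ => ‖G (circleMap c r θ)‖) (2 * π) :=
    (periodic_circleMap c r).comp fun z => ‖G z‖
  calc 2 * π * ‖G c‖ ≤ 2 * π * circleAverage (fun z => ‖G z‖) c r := by
        gcongr; exact norm_le_circleAverage_norm hG c r
    _ = ∫ θ in (0)..(0 + 2 * π), ‖G (circleMap c r θ)‖ := by
        rw [circleAverage_def, smul_eq_mul, zero_add, ← mul_assoc,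
          mul_inv_cancel₀ (by positivity), one_mul]
    _ = ∫ θ in Set.Ioo (-π) π, ‖G (circleMap c r θ)‖ := by
        rw [← hper.intervalIntegral_add_eq (-π) 0,
          intervalIntegral.integral_of_le (by linarith [pi_pos]), integral_Ioc_eq_integral_Ioo]
        ring_nf

lemma ofReal_mul_norm_le_setLIntegral_annulus {G : ℂ → V} (hG : Differentiable ℂ G) (c : ℂ)
    {r₁ r₂ : ℝ} (hr₁ : 0 ≤ r₁) (hr : r₁ ≤ r₂) :
    ENNReal.ofReal (π * (r₂ ^ 2 - r₁ ^ 2) * ‖G c‖) ≤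
      ∫⁻ z in annulus c r₁ r₂, ENNReal.ofReal ‖G z‖ := by
  rw [setLIntegral_annulus_eq (f := fun z => ENNReal.ofReal ‖G z‖)
    (ENNReal.measurable_ofReal.comp hG.continuous.norm.measurable) c hr₁]
  calc ENNReal.ofReal (π * (r₂ ^ 2 - r₁ ^ 2) * ‖G c‖)
      = (∫⁻ r in Set.Ioo r₁ r₂, ENNReal.ofReal r) * ENNReal.ofReal (2 * π * ‖G c‖) := by
        rw [setLIntegral_Ioo_ofReal hr₁ hr, ← ENNReal.ofReal_mul (by nlinarith)]
        ring_nf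
    _ = ∫⁻ r in Set.Ioo r₁ r₂, ENNReal.ofReal r * ENNReal.ofReal (2 * π * ‖G c‖) :=
        (lintegral_mul_const _ ENNReal.measurable_ofReal).symm
    _ ≤ _ := by
        gcongr with r
        exact ofReal_two_pi_mul_norm_le_setLIntegral_circleMap hG c r

end MeanValue

section SquaringSequence

variable {R : ℕ → ℝ}

lemma squaring_two_le (hR1 : 2 ≤ R 1) (hR : ∀ n ≥ 1, R n ^ 2 ≤ R (n + 1)) {n : ℕ}
    (hn : 1 ≤ n) : 2 ≤ R n := by
  induction n, hn using Nat.le_induction with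
  | base => exact hR1
  | succ n hn ih => nlinarith [hR n hn]

lemma squaring_two_pow_mul_le (hR1 : 2 ≤ R 1) (hR : ∀ n ≥ 1, R n ^ 2 ≤ R (n + 1)) {n : ℕ}
    (hn : 1 ≤ n) (k : ℕ) : 2 ^ k * R n ≤ R (n + k) := by
  induction k with
  | zero => simp
  | succ k ih =>
    have h2 := squaring_two_le hR1 hR (n := n + k) (by omega)
    calc 2 ^ (k + 1) * R n = 2 * (2 ^ k * R n) := by ring
      _ ≤ R (n + k) * R (n + k) := by nlinarith
      _ = R (n + k) ^ 2 := by ring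
      _ ≤ R (n + (k + 1)) := hR (n + k) (by omega)

lemma squaring_sq_le_of_lt (hR1 : 2 ≤ R 1) (hR : ∀ n ≥ 1, R n ^ 2 ≤ R (n + 1)) {m n : ℕ}
    (hm : 1 ≤ m) (hmn : m < n) : R m ^ 2 ≤ R n := by
  obtain ⟨k, rfl⟩ : ∃ k, n = m + 1 + k := ⟨n - (m + 1), by omega⟩
  have h2 := squaring_two_le hR1 hR (n := m + 1) (by omega)
  calc R m ^ 2 ≤ R (m + 1) := hR m hm
    _ ≤ 2 ^ k * R (m + 1) := le_mul_of_one_le_left (by positivity) (one_le_pow₀ one_le_two)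
    _ ≤ R (m + 1 + k) := squaring_two_pow_mul_le hR1 hR (by omega) k

lemma squaring_natCast_sq_le (hR1 : 2 ≤ R 1) (hR : ∀ n ≥ 1, R n ^ 2 ≤ R (n + 1)) {n : ℕ}
    (hn : 1 ≤ n) : (n : ℝ) ^ 2 ≤ R n := by
  induction n, hn using Nat.le_induction with
  | base => norm_num; linarith
  | succ n hn ih =>
    have hn' : (1 : ℝ) ≤ n := by exact_mod_cast hn
    have hsucc : (n : ℝ) + 1 ≤ R n := by
      rcases hn.eq_or_lt with rfl | h2
      · norm_num; linarith
      · have : (2 : ℝ) ≤ n := by exact_mod_cast h2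
        nlinarith
    push_cast
    nlinarith [hR n hn]

end SquaringSequence

section NormedField

variable {𝕜 : Type*} [NormedField 𝕜]

lemma one_le_norm_one_sub_pow {u : 𝕜} (hu : 2 ≤ ‖u‖) {m : ℕ} (hm : m ≠ 0) :
    1 ≤ ‖1 - u ^ m‖ := by
  have hpow : ‖u‖ ≤ ‖u ^ m‖ := by
    rw [norm_pow]; exact le_self_pow₀ (by linarith) hm
  have := norm_sub_norm_le (u ^ m) 1
  rw [norm_sub_rev, norm_one] at this
  linarith

lemma one_sub_sum_norm_le_norm_prod_one_sub {ι : Type*} (s : Finset ι) (u : ι → 𝕜)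
    (hu : ∀ i ∈ s, ‖u i‖ ≤ 1) : 1 - ∑ i ∈ s, ‖u i‖ ≤ ‖∏ i ∈ s, (1 - u i)‖ := by
  induction s using Finset.cons_induction with
  | empty => simp
  | cons a s ha ih =>
    rw [sum_cons, prod_cons, norm_mul]
    have hua := hu a (mem_cons_self a s)
    have ih := ih fun i hi => hu i (mem_cons_of_mem hi)
    have hsum : 0 ≤ ∑ i ∈ s, ‖u i‖ := sum_nonneg fun i _ => norm_nonneg _
    have hfac : 1 - ‖u a‖ ≤ ‖1 - u a‖ := by
      simpa using norm_sub_norm_le (1 : 𝕜) (u a)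
    have hprod := norm_nonneg (∏ i ∈ s, (1 - u i))
    nlinarith [mul_le_mul_of_nonneg_right hfac hprod,
      mul_le_mul_of_nonneg_left ih (sub_nonneg.2 hua), mul_nonneg (norm_nonneg (u a)) hsum]

end NormedField

noncomputable def partialProd (R : ℕ → ℝ) (N : ℕ) (z : ℂ) : ℂ :=
  ∏ n ∈ Icc 1 N, (1 - (z / (R n : ℂ)) ^ n)

section PartialProduct

variable {R : ℕ → ℝ}

lemma norm_div_ofReal_of_pos {w : ℂ} {r : ℝ} (hr : 0 < r) : ‖w / (r : ℂ)‖ = ‖w‖ / r := by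
  rw [norm_div, Complex.norm_real, Real.norm_of_nonneg hr.le]

lemma one_le_norm_factor_of_lt (hR1 : 2 ≤ R 1) (hR : ∀ n ≥ 1, R n ^ 2 ≤ R (n + 1))
    {m n : ℕ} (hm : 1 ≤ m) (hmn : m < n) {w : ℂ} (hw : R n ≤ ‖w‖) :
    1 ≤ ‖1 - (w / (R m : ℂ)) ^ m‖ := by
  have hRm := squaring_two_le hR1 hR hm
  refine one_le_norm_one_sub_pow ?_ (by omega)
  rw [norm_div_ofReal_of_pos (by linarith), le_div_iff₀ (by linarith)]
  nlinarith [squaring_sq_le_of_lt hR1 hR hm hmn]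

lemma one_div_four_le_norm_factor_self (hR1 : 2 ≤ R 1) (hR : ∀ n ≥ 1, R n ^ 2 ≤ R (n + 1))
    {n : ℕ} (hn : 1 ≤ n) {w : ℂ} (hw : R n + R n / (4 * n) ≤ ‖w‖) :
    1 / 4 ≤ ‖1 - (w / (R n : ℂ)) ^ n‖ := by
  have hRn := squaring_two_le hR1 hR hn
  have hn0 : (0 : ℝ) < n := by exact_mod_cast hn
  have hratio : 1 + 1 / (4 * n) ≤ ‖w / (R n : ℂ)‖ := by
    rw [norm_div_ofReal_of_pos (by linarith), le_div_iff₀ (by linarith)]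
    calc (1 + 1 / (4 * n)) * R n = R n + R n / (4 * n) := by ring
      _ ≤ ‖w‖ := hw
  have hbernoulli : 1 + 1 / 4 ≤ ‖(w / (R n : ℂ)) ^ n‖ := by
    calc (1 : ℝ) + 1 / 4 = 1 + n * (1 / (4 * n)) := by field_simp
      _ ≤ (1 + 1 / (4 * n)) ^ n :=
          one_add_mul_le_pow (by linarith [(by positivity : (0 : ℝ) ≤ 1 / (4 * n))]) n
      _ ≤ ‖(w / (R n : ℂ)) ^ n‖ := by rw [norm_pow]; gcongr
  have := norm_sub_norm_le ((w / (R n : ℂ)) ^ n) 1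
  rw [norm_sub_rev, norm_one] at this
  linarith

lemma norm_factor_tail_le (hR1 : 2 ≤ R 1) (hR : ∀ n ≥ 1, R n ^ 2 ≤ R (n + 1))
    {n : ℕ} (hn : 1 ≤ n) {w : ℂ} (hw : ‖w‖ ≤ 2 * R n) (k : ℕ) :
    ‖(w / (R (n + 1 + k) : ℂ)) ^ (n + 1 + k)‖ ≤ 2 / R n * (1 / 2) ^ k := by
  have hRn := squaring_two_le hR1 hR hn
  have hgrowth : 2 ^ k * R n ^ 2 ≤ R (n + 1 + k) :=
    (mul_le_mul_of_nonneg_left (hR n hn) (by positivity)).trans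
      (squaring_two_pow_mul_le hR1 hR (by omega) k)
  have hRm : 0 < R (n + 1 + k) := lt_of_lt_of_le (by positivity) hgrowth
  have hratio : ‖w / (R (n + 1 + k) : ℂ)‖ ≤ 2 / R n * (1 / 2) ^ k := by
    rw [norm_div_ofReal_of_pos hRm, div_le_iff₀ hRm]
    calc ‖w‖ ≤ 2 * R n := hw
      _ = 2 / R n * (1 / 2) ^ k * (2 ^ k * R n ^ 2) := by
        rw [one_div, inv_pow]; field_simp
      _ ≤ 2 / R n * (1 / 2) ^ k * R (n + 1 + k) := by gcongr
  have hle_one : 2 / R n * (1 / 2) ^ k ≤ 1 := by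
    calc 2 / R n * (1 / 2) ^ k ≤ 1 * 1 := by
          gcongr
          · rw [div_le_one (by linarith)]; exact hRn
          · exact pow_le_one₀ (by norm_num) (by norm_num)
      _ = 1 := one_mul 1
  rw [norm_pow]
  exact (pow_le_of_le_one (norm_nonneg _) (hratio.trans hle_one) (by omega)).trans hratio

lemma one_div_two_le_norm_prod_tail (hR1 : 2 ≤ R 1) (hR : ∀ n ≥ 1, R n ^ 2 ≤ R (n + 1))
    {n : ℕ} (hn : 3 ≤ n) {w : ℂ} (hw : ‖w‖ ≤ 2 * R n) (j : ℕ) :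
    1 / 2 ≤ ‖∏ k ∈ range j, (1 - (w / (R (n + 1 + k) : ℂ)) ^ (n + 1 + k))‖ := by
  have hR8 : 8 ≤ R n := by
    have h := squaring_natCast_sq_le hR1 hR (n := n) (by omega)
    have : (3 : ℝ) ≤ n := by exact_mod_cast hn
    nlinarith
  have hsum : ∑ k ∈ range j, ‖(w / (R (n + 1 + k) : ℂ)) ^ (n + 1 + k)‖ ≤ 1 / 2 :=
    calc _ ≤ ∑ k ∈ range j, 2 / R n * (1 / 2) ^ k :=
          sum_le_sum fun k _ => norm_factor_tail_le hR1 hR (by omega) hw k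
      _ = 2 / R n * ∑ k ∈ range j, (1 / 2 : ℝ) ^ k := (mul_sum _ _ _).symm
      _ ≤ 2 / R n * 2 := by gcongr; exact sum_geometric_two_le j
      _ ≤ 1 / 2 := by rw [div_mul_eq_mul_div, div_le_iff₀ (by linarith)]; linarith
  have hsmall : ∀ k ∈ range j, ‖(w / (R (n + 1 + k) : ℂ)) ^ (n + 1 + k)‖ ≤ 1 :=
    fun k hk => by
      linarith [single_le_sum (fun i _ => norm_nonneg ((w / (R (n + 1 + i) : ℂ)) ^ (n + 1 + i))) hk]
  linarith [one_sub_sum_norm_le_norm_prod_one_sub _ _ hsmall]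

lemma one_div_eight_le_norm_partialProd (hR1 : 2 ≤ R 1) (hR : ∀ n ≥ 1, R n ^ 2 ≤ R (n + 1))
    {n : ℕ} (hn : 3 ≤ n) {w : ℂ} (hw₁ : R n + R n / (4 * n) ≤ ‖w‖) (hw₂ : ‖w‖ ≤ 2 * R n)
    {N : ℕ} (hN : n ≤ N) : 1 / 8 ≤ ‖partialProd R N w‖ := by
  set f : ℕ → ℂ := fun m => 1 - (w / (R m : ℂ)) ^ m
  have hsplit : partialProd R N w =
      (∏ m ∈ Ico 1 n, f m) * (f n * ∏ k ∈ range (N - n), f (n + 1 + k)) := by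
    rw [partialProd, ← Ico_add_one_right_eq_Icc, ← prod_Ico_consecutive f (by omega : 1 ≤ n)
      (by omega : n ≤ N + 1), prod_eq_prod_Ico_succ_bot (by omega : n < N + 1),
      prod_Ico_eq_prod_range f (n + 1), show N + 1 - (n + 1) = N - n by omega]
  have hRn := squaring_two_le hR1 hR (n := n) (by omega)
  have hhead : 1 ≤ ‖∏ m ∈ Ico 1 n, f m‖ := by
    rw [norm_prod]
    refine one_le_prod fun m hm => ?_
    rw [mem_Ico] at hm
    refine one_le_norm_factor_of_lt hR1 hR hm.1 hm.2 (le_trans ?_ hw₁)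
    have : 0 ≤ R n / (4 * n) := by positivity
    linarith
  rw [hsplit, norm_mul, norm_mul]
  have hmid := one_div_four_le_norm_factor_self hR1 hR (by omega) hw₁
  have htail := one_div_two_le_norm_prod_tail hR1 hR hn hw₂ (N - n)
  calc (1 : ℝ) / 8 = 1 * (1 / 4 * (1 / 2)) := by norm_num
    _ ≤ _ := by gcongr

end PartialProduct

section ZeroSet

variable {R : ℕ → ℝ} {E : ℂ → ℂ}

lemma apply_R_one_eq_zero (hR1 : 2 ≤ R 1)
    (hE : ∀ w, Tendsto (fun N => partialProd R N w) atTop (nhds (E w))) : E (R 1) = 0 := by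
  refine tendsto_nhds_unique (hE _) (tendsto_const_nhds.congr' ?_)
  filter_upwards [eventually_ge_atTop 1] with N hN
  refine (prod_eq_zero (mem_Icc.2 ⟨le_rfl, hN⟩) ?_).symm
  rw [pow_one, div_self (by exact_mod_cast (by linarith : R 1 ≠ 0)), sub_self]

lemma one_div_eight_le_norm_of_tendsto (hR1 : 2 ≤ R 1) (hR : ∀ n ≥ 1, R n ^ 2 ≤ R (n + 1))
    (hE : ∀ w, Tendsto (fun N => partialProd R N w) atTop (nhds (E w)))
    {n : ℕ} (hn : 3 ≤ n) {w : ℂ} (hw₁ : R n + R n / (4 * n) ≤ ‖w‖) (hw₂ : ‖w‖ ≤ 2 * R n) :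
    1 / 8 ≤ ‖E w‖ :=
  ge_of_tendsto (hE w).norm <| (eventually_ge_atTop n).mono fun _ hN =>
    one_div_eight_le_norm_partialProd hR1 hR hn hw₁ hw₂ hN

lemma le_infDist_zeroSet (hR1 : 2 ≤ R 1) (hR : ∀ n ≥ 1, R n ^ 2 ≤ R (n + 1))
    (hE : ∀ w, Tendsto (fun N => partialProd R N w) atTop (nhds (E w)))
    {n : ℕ} (hn : 3 ≤ n) {z : ℂ} (hz₁ : R n + R n / (2 * n) ≤ ‖z‖)
    (hz₂ : ‖z‖ ≤ R n + 3 * R n / (4 * n)) :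
    R n / (4 * n) ≤ Metric.infDist z {w | E w = 0} := by
  rw [Metric.le_infDist (s := {w | E w = 0}) ⟨_, apply_R_one_eq_zero hR1 hE⟩]
  intro y hy
  by_contra! hclose
  have hn0 : (3 : ℝ) ≤ n := by exact_mod_cast hn
  have hRn := squaring_two_le hR1 hR (n := n) (by omega)
  have hnorm := abs_norm_sub_norm_le z y
  rw [← dist_eq_norm, abs_le] at hnorm
  have hquarter : R n / (2 * n) = R n / (4 * n) + R n / (4 * n) := by field_simp; ring
  have hupper : 3 * R n / (4 * n) + R n / (4 * n) ≤ R n := by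
    rw [← add_div, div_le_iff₀ (by positivity)]; nlinarith
  have := one_div_eight_le_norm_of_tendsto hR1 hR hE hn (w := y) (by linarith) (by linarith)
  rw [show E y = 0 from hy, norm_zero] at this
  norm_num at this

lemma div_le_norm_sq_mul_exp {h : ℂ → ℝ} {c : ℝ} (hc : 0 < c) (hR1 : 2 ≤ R 1)
    (hR : ∀ n ≥ 1, R n ^ 2 ≤ R (n + 1))
    (hE : ∀ w, Tendsto (fun N => partialProd R N w) atTop (nhds (E w)))
    (hcomp : ∀ n : ℕ, 1 ≤ n → ∀ z : ℂ, |‖z‖ - R n| ≤ R n / n →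
      c * n ^ 2 * (Metric.infDist z {w : ℂ | E w = 0}) ^ 2 / R n ^ 3
        ≤ ‖E z‖ ^ 2 * Real.exp (-h z))
    {n : ℕ} (hn : 3 ≤ n) {z : ℂ} (hz₁ : R n + R n / (2 * n) ≤ ‖z‖)
    (hz₂ : ‖z‖ ≤ R n + 3 * R n / (4 * n)) :
    c / (16 * R n) ≤ ‖E z‖ ^ 2 * Real.exp (-h z) := by
  have hn0 : (3 : ℝ) ≤ n := by exact_mod_cast hn
  have hRn := squaring_two_le hR1 hR (n := n) (by omega)
  have hann : |‖z‖ - R n| ≤ R n / n := by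
    have : 0 ≤ R n / (2 * n) := by positivity
    have : 3 * R n / (4 * n) ≤ R n / n := by
      rw [div_le_div_iff₀ (by positivity) (by positivity)]; nlinarith
    rw [abs_le]; constructor <;> linarith
  have hdist := le_infDist_zeroSet hR1 hR hE hn hz₁ hz₂
  calc c / (16 * R n) = c * n ^ 2 * (R n / (4 * n)) ^ 2 / R n ^ 3 := by field_simp; ring
    _ ≤ c * n ^ 2 * (Metric.infDist z {w : ℂ | E w = 0}) ^ 2 / R n ^ 3 := by gcongr
    _ ≤ _ := hcomp n (by omega) z hann

end ZeroSet

lemma eq_top_of_eventually_ofReal_mul_le {x : ℝ≥0∞} {κ : ℝ} (hκ : 0 < κ)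
    (h : ∀ᶠ n : ℕ in atTop, ENNReal.ofReal (κ * n) ≤ x) : x = ⊤ := by
  by_contra hx
  have hunbounded := (tendsto_natCast_atTop_atTop.const_mul_atTop hκ).eventually_gt_atTop x.toReal
  obtain ⟨n, hle, hgt⟩ := (h.and hunbounded).exists
  exact (ENNReal.ofReal_le_iff_le_toReal hx).1 hle |>.not_gt hgt

lemma ofReal_le_lintegral_of_le_on_annulus {F : ℂ → ℂ} (hF : Differentiable ℂ F) {W : ℂ → ℝ}
    {κ : ℝ} (hκ : 0 ≤ κ) (z₀ : ℂ) {r₁ r₂ : ℝ} (hr₁ : 0 ≤ r₁) (hr : r₁ ≤ r₂)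
    (hW : ∀ z ∈ annulus z₀ r₁ r₂, κ ≤ W z) :
    ENNReal.ofReal (κ * (π * (r₂ ^ 2 - r₁ ^ 2) * ‖F z₀‖ ^ 2)) ≤
      ∫⁻ z, ENNReal.ofReal (‖F z‖ ^ 2 * W z) := by
  have hFsq : ∀ z, ‖F z‖ ^ 2 = ‖(F ^ 2) z‖ := fun z => by rw [Pi.pow_apply, norm_pow]
  calc ENNReal.ofReal (κ * (π * (r₂ ^ 2 - r₁ ^ 2) * ‖F z₀‖ ^ 2))
      = ENNReal.ofReal κ * ENNReal.ofReal (π * (r₂ ^ 2 - r₁ ^ 2) * ‖(F ^ 2) z₀‖) := by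
        rw [ENNReal.ofReal_mul hκ, hFsq]
    _ ≤ ENNReal.ofReal κ * ∫⁻ z in annulus z₀ r₁ r₂, ENNReal.ofReal ‖(F ^ 2) z‖ := by
        gcongr
        exact ofReal_mul_norm_le_setLIntegral_annulus (hF.pow 2) z₀ hr₁ hr
    _ = ∫⁻ z in annulus z₀ r₁ r₂, ENNReal.ofReal (κ * ‖(F ^ 2) z‖) := by
        rw [← lintegral_const_mul' _ _ ENNReal.ofReal_ne_top]
        simp_rw [ENNReal.ofReal_mul hκ]
    _ ≤ ∫⁻ z in annulus z₀ r₁ r₂, ENNReal.ofReal (‖F z‖ ^ 2 * W z) :=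
        setLIntegral_mono' (measurableSet_annulus z₀ r₁ r₂) fun z hz =>
          ENNReal.ofReal_le_ofReal <| by
            rw [← hFsq, mul_comm]; exact mul_le_mul_of_nonneg_left (hW z hz) (by positivity)
    _ ≤ _ := setLIntegral_le_lintegral _ _

lemma ofReal_le_lintegral_weighted {R : ℕ → ℝ} {E F : ℂ → ℂ} {h : ℂ → ℝ} {c : ℝ} (hc : 0 < c)
    (hR1 : 2 ≤ R 1) (hR : ∀ n ≥ 1, R n ^ 2 ≤ R (n + 1))
    (hE : ∀ w, Tendsto (fun N => partialProd R N w) atTop (nhds (E w)))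
    (hcomp : ∀ n : ℕ, 1 ≤ n → ∀ z : ℂ, |‖z‖ - R n| ≤ R n / n →
      c * n ^ 2 * (Metric.infDist z {w : ℂ | E w = 0}) ^ 2 / R n ^ 3
        ≤ ‖E z‖ ^ 2 * Real.exp (-h z))
    (hF : Differentiable ℂ F) (z₀ : ℂ) {n : ℕ} (hn : 3 ≤ n) (hz₀ : 16 * ‖z₀‖ ≤ n) :
    ENNReal.ofReal (c * π * ‖F z₀‖ ^ 2 / 64 * n) ≤
      ∫⁻ z, ENNReal.ofReal (‖F z‖ ^ 2 * ‖E z‖ ^ 2 * Real.exp (-h z)) := by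
  set a := R n + R n / (2 * n) + ‖z₀‖ with ha_def
  set b := R n + 3 * R n / (4 * n) - ‖z₀‖ with hb_def
  have hn0 : (3 : ℝ) ≤ n := by exact_mod_cast hn
  have hRn := squaring_natCast_sq_le hR1 hR (n := n) (by omega)
  have hRpos : 0 < R n := by nlinarith
  have hgap : R n / (8 * n) ≤ b - a := by
    have : b - a = R n / (4 * n) - 2 * ‖z₀‖ := by rw [ha_def, hb_def]; field_simp; ring
    rw [this, le_sub_comm, show R n / (4 * n) - R n / (8 * n) = R n / (8 * n) by
      field_simp; ring, le_div_iff₀ (by positivity)]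
    nlinarith [norm_nonneg z₀]
  have hab : R n ^ 2 / (4 * n) ≤ b ^ 2 - a ^ 2 := by
    have hsum : 2 * R n ≤ b + a := by
      have : 0 ≤ R n / (2 * n) + 3 * R n / (4 * n) := by positivity
      linarith
    calc R n ^ 2 / (4 * n) = R n / (8 * n) * (2 * R n) := by field_simp; ring
      _ ≤ (b - a) * (b + a) := by gcongr; linarith [(by positivity : 0 ≤ R n / (8 * n))]
      _ = b ^ 2 - a ^ 2 := by ring
  have hweight : ∀ z ∈ annulus z₀ a b, c / (16 * R n) ≤ ‖E z‖ ^ 2 * Real.exp (-h z) := by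
    intro z hz
    have h₁ := norm_sub_le z z₀
    have h₂ := norm_le_norm_add_norm_sub' z z₀
    exact div_le_norm_sq_mul_exp hc hR1 hR hE hcomp hn (by linarith [hz.1]) (by linarith [hz.2])
  have hlower := ofReal_le_lintegral_of_le_on_annulus hF (by positivity) z₀
    (by rw [ha_def]; positivity) (by linarith [(by positivity : 0 ≤ R n / (8 * n))]) hweight
  simp_rw [← mul_assoc] at hlower
  refine le_trans (ENNReal.ofReal_le_ofReal ?_) hlower
  calc c * π * ‖F z₀‖ ^ 2 / 64 * n ≤ c * π * ‖F z₀‖ ^ 2 / 64 * (R n / n) := by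
        gcongr; rw [le_div_iff₀ (by positivity)]; nlinarith
    _ = c / (16 * R n) * π * (R n ^ 2 / (4 * n)) * ‖F z₀‖ ^ 2 := by field_simp; ring
    _ ≤ _ := by gcongr

/-- If |E(z)|² e^{-h(z)} ≍ n² dist²(z,Λ)/Rₙ³ on the annuli ||z| − Rₙ| ≤ Rₙ/n,
then for every entire F ≢ 0 one has ∫ |F|²|E|² e^{-h} dm = ∞; in particular
F·E ∉ F_h. -/
theorem stmt_16 (R : ℕ → ℝ) (hR1 : 2 ≤ R 1) (hR : ∀ n ≥ 1, (R n) ^ 2 ≤ R (n + 1))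
    (E : ℂ → ℂ)
    (hE : TendstoLocallyUniformly
      (fun N : ℕ => fun z : ℂ => ∏ n ∈ Icc 1 N, (1 - (z / (R n : ℂ)) ^ n)) E atTop)
    (h : ℂ → ℝ)
    (hcomp : ∃ c > (0:ℝ), ∃ C > (0:ℝ), ∀ n : ℕ, 1 ≤ n → ∀ z : ℂ,
      |‖z‖ - R n| ≤ R n / n →
      c * n ^ 2 * (Metric.infDist z {w : ℂ | E w = 0}) ^ 2 / R n ^ 3
          ≤ ‖E z‖ ^ 2 * Real.exp (-h z) ∧
      ‖E z‖ ^ 2 * Real.exp (-h z)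
          ≤ C * n ^ 2 * (Metric.infDist z {w : ℂ | E w = 0}) ^ 2 / R n ^ 3) :
    ∀ F : ℂ → ℂ, Differentiable ℂ F → (∃ z, F z ≠ 0) →
      ∫⁻ z : ℂ, ENNReal.ofReal
        (‖F z‖ ^ 2 * ‖E z‖ ^ 2 * Real.exp (-h z)) = ⊤ := by
  obtain ⟨c, hc, _, -, hcomp⟩ := hcomp
  rintro F hF ⟨z₀, hz₀⟩
  have hE' : ∀ w, Tendsto (fun N => partialProd R N w) atTop (nhds (E w)) := fun w =>
    (tendstoLocallyUniformlyOn_univ.2 hE).tendsto_at (Set.mem_univ w)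
  refine eq_top_of_eventually_ofReal_mul_le (by positivity : 0 < c * π * ‖F z₀‖ ^ 2 / 64) ?_
  filter_upwards [eventually_ge_atTop 3,
    tendsto_natCast_atTop_atTop.eventually_ge_atTop (16 * ‖z₀‖)] with n hn hz₀n
  exact ofReal_le_lintegral_weighted hc hR1 hR hE' (fun n hn z hz => (hcomp n hn z hz).1) hF z₀
    hn hz₀n
end

section
/- Let t_k, s_k be sequences with t_k ∈ ℕ, s_k ≥ 1, t_k > t_{k−1} + 1, and s_k > 2 t_k s_{k−1} for k > 1. Define p_n = log Σ_{k≥1} e^{(n − t_k) s_k}. Then p_n = max_{k≥1} (n − t_k)s_k + O(1) uniformly in n ≥ 1, and for t_k + 1 ≤ n ≤ t_{k+1}, p_n = (n − t_k) s_k + O(1); in particular the sequence {p_n} is affine (up to O(1)) on each block [t_k + 1, t_{k+1}]. -/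
open Real Finset

/-!
Write `f_k = (n - t_k) s_k`. Lacunarity makes `k ↦ f_k` rise by at least `1` at each step
while `t_{k+1} < n` and fall by at least `1` at each step once `n ≤ t_{k+1}`, so the block
index `m` of `n` is a peak with `f_j ≤ f_m - |j - m|`. Bounding the terms on either side of
the peak by geometric series of ratio `1/2` puts `Σ_j e^{f_j}` between `e^{f_m}` and
`4 e^{f_m}`, so `p_n = f_m + O(1)` with constant `log 4`.
-/

theorem exp_neg_natCast_le_half_pow (k : ℕ) : exp (-k) ≤ (1 / 2) ^ k := by
  rw [← mul_neg_one, exp_nat_mul]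
  exact pow_le_pow_left₀ (exp_pos _).le exp_neg_one_lt_half.le k

section Peak

variable {f : ℕ → ℝ} {m : ℕ}

theorem le_sub_abs_of_unimodal (hup : ∀ k < m, f k + 1 ≤ f (k + 1))
    (hdown : ∀ k ≥ m, f (k + 1) + 1 ≤ f k) (j : ℕ) : f j ≤ f m - |(j : ℝ) - m| := by
  have hleft : ∀ i j, j + i = m → f j + i ≤ f m := by
    intro i
    induction i with
    | zero => intro j hj; simp [← hj]
    | succ i ih =>
      intro j hj
      have := ih (j + 1) (by omega)
      have := hup j (by omega)
      push_cast; linarith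
  have hright : ∀ i : ℕ, f (m + i) + i ≤ f m := by
    intro i
    induction i with
    | zero => simp
    | succ i ih =>
      have := hdown (m + i) (by omega)
      rw [← add_assoc]; push_cast; linarith
  rcases le_total j m with h | h
  · obtain ⟨i, rfl⟩ := Nat.exists_eq_add_of_le h
    have := hleft i j rfl
    rw [abs_of_nonpos (by push_cast; linarith)]
    push_cast; linarith
  · obtain ⟨i, rfl⟩ := Nat.exists_eq_add_of_le h
    have := hright i
    rw [abs_of_nonneg (by push_cast; linarith)]
    push_cast; linarith

theorem exp_le_mul_half_pow_of_le_sub_abs {j k : ℕ} (hf : f j ≤ f m - |(j : ℝ) - m|)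
    (hk : (k : ℝ) ≤ |(j : ℝ) - m|) : exp (f j) ≤ exp (f m) * (1 / 2) ^ k :=
  calc exp (f j) ≤ exp (f m + -k) := exp_le_exp.2 (by linarith)
    _ = exp (f m) * exp (-k) := exp_add _ _
    _ ≤ exp (f m) * (1 / 2) ^ k :=
      mul_le_mul_of_nonneg_left (exp_neg_natCast_le_half_pow k) (exp_pos _).le

theorem exp_add_le_mul_half_pow (hf : ∀ j, f j ≤ f m - |(j : ℝ) - m|) (i : ℕ) :
    exp (f (i + m)) ≤ exp (f m) * (1 / 2) ^ i :=
  exp_le_mul_half_pow_of_le_sub_abs (hf _) (by push_cast; simp)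

theorem summable_exp_of_le_sub_abs (hf : ∀ j, f j ≤ f m - |(j : ℝ) - m|) :
    Summable fun j => exp (f j) :=
  (summable_nat_add_iff m).1 <| summable_geometric_two.mul_left _ |>.of_nonneg_of_le
    (fun _ => (exp_pos _).le) (exp_add_le_mul_half_pow hf)

theorem tsum_exp_le_four_mul (hf : ∀ j, f j ≤ f m - |(j : ℝ) - m|) :
    ∑' j, exp (f j) ≤ 4 * exp (f m) := by
  have hsum := summable_exp_of_le_sub_abs hf
  have head : ∑ j ∈ range m, exp (f j) ≤ 2 * exp (f m) :=
    calc ∑ j ∈ range m, exp (f j) ≤ ∑ j ∈ range m, exp (f m) * (1 / 2) ^ (m - 1 - j) :=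
          sum_le_sum fun j hj => exp_le_mul_half_pow_of_le_sub_abs (hf j) <| by
            have hjm := mem_range.1 hj
            have : (j : ℝ) + 1 ≤ m := by exact_mod_cast hjm
            rw [abs_of_neg (by linarith), Nat.cast_sub (by omega), Nat.cast_sub (by omega)]
            push_cast; linarith
      _ = exp (f m) * ∑ i ∈ range m, (1 / 2 : ℝ) ^ i := by
          rw [← mul_sum, sum_range_reflect (fun i => (1 / 2 : ℝ) ^ i) m]
      _ ≤ 2 * exp (f m) := by
          linarith [mul_le_mul_of_nonneg_left (sum_geometric_two_le m) (exp_pos (f m)).le]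
  have tail : ∑' i, exp (f (i + m)) ≤ 2 * exp (f m) :=
    calc ∑' i, exp (f (i + m)) ≤ ∑' i, exp (f m) * (1 / 2 : ℝ) ^ i :=
          ((summable_nat_add_iff m).2 hsum).tsum_le_tsum (exp_add_le_mul_half_pow hf)
            (summable_geometric_two.mul_left _)
      _ = 2 * exp (f m) := by rw [tsum_mul_left, tsum_geometric_two, mul_comm]
  rw [← hsum.sum_add_tsum_nat_add m]
  linarith

theorem abs_log_tsum_exp_sub_le (hf : ∀ j, f j ≤ f m - |(j : ℝ) - m|) :
    |log (∑' j, exp (f j)) - f m| ≤ log 4 := by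
  have hlow : exp (f m) ≤ ∑' j, exp (f j) :=
    (summable_exp_of_le_sub_abs hf).le_tsum m fun j _ => (exp_pos _).le
  have hpos := (exp_pos (f m)).trans_le hlow
  have hup : log (∑' j, exp (f j)) ≤ log 4 + f m := by
    rw [← log_exp (f m), ← log_mul (by norm_num) (exp_pos _).ne']
    exact log_le_log hpos (tsum_exp_le_four_mul hf)
  rw [abs_le]
  constructor
  · linarith [(le_log_iff_exp_le hpos).2 hlow, log_nonneg (by norm_num : (1 : ℝ) ≤ 4)]
  · linarith

end Peak

section Lacunary

theorem add_one_le_of_lacunary_of_lt {n a a' σ σ' : ℝ} (ha : 0 ≤ a) (haa' : a + 2 ≤ a')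
    (hσ : 1 ≤ σ) (hlac : 2 * a' * σ < σ') (hn : a' + 1 ≤ n) :
    (n - a) * σ + 1 ≤ (n - a') * σ' := by
  nlinarith [mul_nonneg (by linarith : 0 ≤ n - a' - 1) (by nlinarith : 0 ≤ σ' - σ),
    mul_nonneg ha (by linarith : 0 ≤ σ),
    mul_nonneg (by linarith : 0 ≤ a' - 2) (by linarith : 0 ≤ σ)]

theorem add_one_le_of_lacunary_of_le {n a a' σ σ' : ℝ} (ha : 0 ≤ a) (haa' : a + 2 ≤ a')
    (hσ : 1 ≤ σ) (hlac : 2 * a' * σ < σ') (hn : n ≤ a') :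
    (n - a') * σ' + 1 ≤ (n - a) * σ := by
  nlinarith [mul_nonneg (by linarith : 0 ≤ a' - n) (by nlinarith : 0 ≤ σ' - σ)]

variable {T : ℕ → ℕ} {S : ℕ → ℝ}

theorem le_sub_abs_of_block (hS : ∀ k, 1 ≤ S k) (hT : ∀ k, T k + 1 < T (k + 1))
    (hlac : ∀ k, 2 * (T (k + 1) : ℝ) * S k < S (k + 1)) {n m : ℕ}
    (hbelow : ∀ k < m, T (k + 1) < n) (habove : ∀ k ≥ m, n ≤ T (k + 1)) (j : ℕ) :
    ((n : ℝ) - T j) * S j ≤ ((n : ℝ) - T m) * S m - |(j : ℝ) - m| := by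
  have hT' (k : ℕ) : (T k : ℝ) + 2 ≤ T (k + 1) := by exact_mod_cast hT k
  refine le_sub_abs_of_unimodal (f := fun k => ((n : ℝ) - T k) * S k)
    (fun k hk => ?_) (fun k hk => ?_) j
  · exact add_one_le_of_lacunary_of_lt (Nat.cast_nonneg _) (hT' k) (hS k) (hlac k)
      (by exact_mod_cast hbelow k hk)
  · exact add_one_le_of_lacunary_of_le (Nat.cast_nonneg _) (hT' k) (hS k) (hlac k)
      (by exact_mod_cast habove k hk)

theorem exists_block (hT : StrictMono T) (n : ℕ) :
    ∃ m, (∀ k < m, T (k + 1) < n) ∧ ∀ k ≥ m, n ≤ T (k + 1) := by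
  have h : ∃ k, n ≤ T (k + 1) := ⟨n, (Nat.le_succ n).trans (hT.id_le _)⟩
  exact ⟨Nat.find h, fun k hk => not_le.1 (Nat.find_min h hk),
    fun k hk => (Nat.find_spec h).trans (hT.monotone (by omega))⟩

end Lacunary

/-- Under the lacunarity conditions on (t_k, s_k), the log-moment sequence
p_n = log Σ_k e^{(n−t_k)s_k} equals max_k (n−t_k)s_k up to O(1), and on each
block t_k + 1 ≤ n ≤ t_{k+1} it equals (n−t_k)s_k up to O(1). -/
theorem stmt_17 (t : ℕ → ℕ) (s : ℕ → ℝ)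
    (hs1 : ∀ k ≥ 1, 1 ≤ s k)
    (ht : ∀ k ≥ 2, t (k - 1) + 1 < t k)
    (hlac : ∀ k ≥ 2, 2 * t k * s (k - 1) < s k) :
    ∃ C : ℝ, ∀ n : ℕ, 1 ≤ n →
      let p : ℝ := Real.log (∑' k : ℕ, Real.exp (((n : ℝ) - t (k + 1)) * s (k + 1)))
      |p - ⨆ k : ℕ, ((n : ℝ) - t (k + 1)) * s (k + 1)| ≤ C ∧
      ∀ k : ℕ, 1 ≤ k → t k + 1 ≤ n → n ≤ t (k + 1) →
        |p - ((n : ℝ) - t k) * s k| ≤ C := by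
  have hS (k : ℕ) : 1 ≤ s (k + 1) := hs1 (k + 1) (by omega)
  have hT (k : ℕ) : t (k + 1) + 1 < t (k + 1 + 1) := ht (k + 2) (by omega)
  have hlac' (k : ℕ) : 2 * (t (k + 1 + 1) : ℝ) * s (k + 1) < s (k + 1 + 1) :=
    hlac (k + 2) (by omega)
  have hmono : StrictMono fun k => t (k + 1) := strictMono_nat_of_lt_succ fun k => by
    have := hT k; omega
  refine ⟨log 4, fun n _ => ?_⟩
  have peak {m : ℕ} (hbelow : ∀ k < m, t (k + 1 + 1) < n)
      (habove : ∀ k ≥ m, n ≤ t (k + 1 + 1)) :=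
    le_sub_abs_of_block hS hT hlac' hbelow habove
  obtain ⟨m, hbelow, habove⟩ := exists_block hmono n
  refine ⟨?_, fun k hk hlo hhi => ?_⟩
  · rw [ciSup_eq_of_forall_le_of_forall_lt_exists_gt
      (fun j => (peak hbelow habove j).trans (sub_le_self _ (abs_nonneg _)))
      fun w hw => ⟨m, hw⟩]
    exact abs_log_tsum_exp_sub_le (peak hbelow habove)
  · obtain ⟨k, rfl⟩ : ∃ i, k = i + 1 := ⟨k - 1, by omega⟩
    exact abs_log_tsum_exp_sub_le <|
      peak (fun i hi => (hmono.monotone (by omega : i + 1 ≤ k)).trans_lt hlo)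
        fun i hi => hhi.trans (hmono.monotone (by omega : k + 1 ≤ i + 1))
end

section
/- Let Λ ⊂ ℂ and ρ > 0 with dist(λ, Λ∖{λ}) ≥ βρ for all λ ∈ Λ in a disc D' of radius (N+1)ρ. Suppose E is entire with simple zeros on Λ, and for each λ ∈ Λ ∩ D, ∫_ℂ |E(z)|²/|z−λ|² e^{−h(z)} dm(z) ≤ (C/ρ²) ∫_{|z−λ|<ρ} |E(z)|² e^{−h(z)} dm(z). Then ∫_ℂ (Σ_{λ ∈ Λ ∩ D} 1/|z−λ|²) |E(z)|² e^{−h(z)} dm(z) ≤ (C'/ρ²) ∫_{D'} |E(z)|² e^{−h(z)} dm(z), where D is the disc of radius Nρ concentric with D', and C' depends only on C and β. -/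
/-!
The discs `B(λ, ρ)`, `λ ∈ Λ ∩ D`, lie in `D'` and overlap boundedly: the centres of those
containing a given point `z` are `βρ`-separated points of `B(z, ρ)`, so the disjoint discs of
radius `βρ/2` around them fit into `B(z, ρ + βρ/2)`, and comparing areas leaves room for at most
`((2 + β)/β)² ≤ 9/β²` of them. Summing the localized estimates over `λ` and exchanging sum and
integral therefore gives the claim with `C' = 9C/β²`.
-/

open MeasureTheory ENNReal Metric Module

theorem Finset.card_le_of_pairwise_le_dist_of_subset_ball {V : Type*} [NormedAddCommGroup V]
    [NormedSpace ℝ V] [FiniteDimensional ℝ V] {r R : ℝ} (hr : 0 < r) (hR : 0 ≤ R) {c : V}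
    {T : Finset V} (hT : ∀ x ∈ T, dist x c < R)
    (hsep : (T : Set V).Pairwise fun x y => 2 * r ≤ dist x y) :
    (T.card : ℝ) ≤ ((R + r) / r) ^ finrank ℝ V := by
  borelize V
  set μ : Measure V := Measure.addHaar
  have hdisj : (T : Set V).PairwiseDisjoint (ball · r) := fun x hx y hy hxy =>
    ball_disjoint_ball (by linarith [hsep hx hy hxy])
  have hcover : (⋃ x ∈ T, ball x r) ⊆ ball c (R + r) := by
    simp only [Set.iUnion_subset_iff]
    intro x hx z hz
    rw [mem_ball] at hz ⊢
    linarith [dist_triangle z x c, hT x hx]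
  have hvol : (T.card : ℝ≥0∞) * ENNReal.ofReal (r ^ finrank ℝ V) * μ (ball 0 1)
      ≤ ENNReal.ofReal ((R + r) ^ finrank ℝ V) * μ (ball 0 1) :=
    calc (T.card : ℝ≥0∞) * ENNReal.ofReal (r ^ finrank ℝ V) * μ (ball 0 1)
        = ∑ x ∈ T, μ (ball x r) := by
          simp [Measure.addHaar_ball_of_pos μ _ hr, mul_assoc]
      _ = μ (⋃ x ∈ T, ball x r) := (measure_biUnion_finset hdisj fun _ _ => measurableSet_ball).symm
      _ ≤ μ (ball c (R + r)) := measure_mono hcover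
      _ = _ := Measure.addHaar_ball_of_pos μ c (by linarith)
  rw [ENNReal.mul_le_mul_iff_left (measure_ball_pos μ 0 one_pos).ne' measure_ball_lt_top.ne,
    ← ENNReal.ofReal_natCast, ← ENNReal.ofReal_mul (by positivity),
    ENNReal.ofReal_le_ofReal_iff (by positivity)] at hvol
  rw [div_pow, le_div_iff₀ (by positivity)]
  exact hvol

theorem Set.Finite.of_pairwise_le_dist_of_subset_ball {V : Type*} [NormedAddCommGroup V]
    [NormedSpace ℝ V] [FiniteDimensional ℝ V] {r R : ℝ} (hr : 0 < r) (hR : 0 ≤ R) {c : V}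
    {S : Set V} (hS : ∀ x ∈ S, dist x c < R) (hsep : S.Pairwise fun x y => 2 * r ≤ dist x y) :
    S.Finite := by
  by_contra hinf
  obtain ⟨T, hTS, hcard⟩ :=
    Set.Infinite.exists_subset_card_eq hinf (⌈((R + r) / r) ^ finrank ℝ V⌉₊ + 1)
  have hT := Finset.card_le_of_pairwise_le_dist_of_subset_ball hr hR (fun x hx => hS x (hTS hx))
    (hsep.mono hTS)
  rw [hcard] at hT
  push_cast at hT
  linarith [Nat.le_ceil (((R + r) / r) ^ finrank ℝ V)]

theorem ENNReal.tsum_indicator_le_of_card_le {ι α : Type*} (s : ι → Set α) (f : α → ℝ≥0∞)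
    {K : ℝ≥0∞} (hK : ∀ x, ∀ T : Finset ι, (∀ i ∈ T, x ∈ s i) → (T.card : ℝ≥0∞) ≤ K) (x : α) :
    ∑' i, (s i).indicator f x ≤ K * f x := by
  classical
  refine ENNReal.summable.tsum_le_of_sum_le fun T => ?_
  simp only [Set.indicator_apply, ← Finset.sum_filter, Finset.sum_const, nsmul_eq_mul]
  exact mul_le_mul_left (hK x _ fun i hi => (Finset.mem_filter.mp hi).2) _

theorem MeasureTheory.lintegral_tsum_le_of_local_bounds {ι α : Type*} [Countable ι]
    [MeasurableSpace α] {μ : Measure α} {F : ι → α → ℝ≥0∞} (hF : ∀ i, AEMeasurable (F i) μ)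
    {g : α → ℝ≥0∞} (hg : AEMeasurable g μ) {s : ι → Set α} (hs : ∀ i, MeasurableSet (s i))
    {t : Set α} (ht : MeasurableSet t) (hst : ∀ i, s i ⊆ t) {A K : ℝ≥0∞}
    (hloc : ∀ i, ∫⁻ x, F i x ∂μ ≤ A * ∫⁻ x in s i, g x ∂μ)
    (hK : ∀ x, ∀ T : Finset ι, (∀ i ∈ T, x ∈ s i) → (T.card : ℝ≥0∞) ≤ K) :
    ∫⁻ x, ∑' i, F i x ∂μ ≤ A * K * ∫⁻ x in t, g x ∂μ := by
  have hind : ∀ i, (s i).indicator g = (s i).indicator (t.indicator g) := fun i => by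
    rw [Set.indicator_indicator, Set.inter_eq_left.mpr (hst i)]
  calc ∫⁻ x, ∑' i, F i x ∂μ = ∑' i, ∫⁻ x, F i x ∂μ := lintegral_tsum hF
    _ ≤ ∑' i, A * ∫⁻ x in s i, g x ∂μ := ENNReal.tsum_le_tsum hloc
    _ = A * ∫⁻ x, ∑' i, (s i).indicator (t.indicator g) x ∂μ := by
      rw [ENNReal.tsum_mul_left, lintegral_tsum fun i => (hg.indicator ht).indicator (hs i)]
      congr 1
      exact tsum_congr fun i => by rw [← hind, lintegral_indicator (hs i)]
    _ ≤ A * ∫⁻ x, K * t.indicator g x ∂μ := by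
      gcongr with x
      exact ENNReal.tsum_indicator_le_of_card_le s _ hK x
    _ = A * K * ∫⁻ x in t, g x ∂μ := by
      rw [lintegral_const_mul'' K (hg.indicator ht), lintegral_indicator ht, mul_assoc]

/-- Summing the localized norm estimates for E_λ = E/(·−λ) over a β-separated
set Λ ∩ D (bounded overlap of the discs B(λ,ρ)) yields
∫ (Σ_{λ∈Λ∩D} 1/|z−λ|²)|E|²e^{−h} dm ≤ (C'/ρ²) ∫_{D'} |E|²e^{−h} dm. -/
theorem stmt_19 : ∀ C > (0:ℝ), ∀ β : ℝ, 0 < β → β ≤ 1 → ∃ C' > (0:ℝ),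
    ∀ (ρ : ℝ), 0 < ρ → ∀ (N : ℕ) (h : ℂ → ℝ), Continuous h →
    ∀ (E : ℂ → ℂ), Differentiable ℂ E → ∀ (Λ : Set ℂ) (w₀ : ℂ),
    (∀ z : ℂ, E z = 0 ↔ z ∈ Λ) → (∀ z ∈ Λ, deriv E z ≠ 0) →
    -- β-separation of Λ in the disc D' of radius (N+1)ρ
    (∀ lam ∈ Λ, ‖lam - w₀‖ < (N + 1) * ρ →
      ∀ mu ∈ Λ, mu ≠ lam → β * ρ ≤ ‖lam - mu‖) →
    -- localized norm estimate for each λ ∈ Λ ∩ D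
    (∀ lam ∈ Λ, ‖lam - w₀‖ < N * ρ →
      (∫⁻ z : ℂ, ENNReal.ofReal (‖E z‖ ^ 2 /
          ‖z - lam‖ ^ 2 * Real.exp (-h z)))
        ≤ ENNReal.ofReal (C / ρ ^ 2) *
          ∫⁻ z in Metric.ball lam ρ,
            ENNReal.ofReal (‖E z‖ ^ 2 * Real.exp (-h z))) →
    (∫⁻ z : ℂ,
        (∑' lam : {l : ℂ // l ∈ Λ ∧ ‖l - w₀‖ < N * ρ},
          ENNReal.ofReal (1 / ‖z - (lam : ℂ)‖ ^ 2)) *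
        ENNReal.ofReal (‖E z‖ ^ 2 * Real.exp (-h z)))
      ≤ ENNReal.ofReal (C' / ρ ^ 2) *
        ∫⁻ z in Metric.ball w₀ ((N + 1) * ρ),
          ENNReal.ofReal (‖E z‖ ^ 2 * Real.exp (-h z)) := by
  intro C hC β hβ hβ1
  refine ⟨C * (3 / β) ^ 2, by positivity, ?_⟩
  intro ρ hρ N h hh E hE Λ w₀ _ _ hsep hloc
  set S := {l : ℂ | l ∈ Λ ∧ ‖l - w₀‖ < N * ρ}
  have hSsep : S.Pairwise fun x y => 2 * (β * ρ / 2) ≤ dist x y := by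
    intro x hx y hy hxy
    rw [Complex.dist_eq]
    linarith [hsep x hx.1 (by linarith [hx.2]) y hy.1 hxy.symm]
  have : Finite S := Set.Finite.of_pairwise_le_dist_of_subset_ball (by positivity)
    (by positivity) (R := N * ρ) (c := w₀) (fun x hx => by rw [Complex.dist_eq]; exact hx.2) hSsep
  have hmult : ∀ z, ∀ T : Finset S, (∀ lam ∈ T, z ∈ ball (lam : ℂ) ρ) →
      (T.card : ℝ≥0∞) ≤ ENNReal.ofReal ((3 / β) ^ 2) := by
    intro z T hT
    have hcard := Finset.card_le_of_pairwise_le_dist_of_subset_ball (by positivity) hρ.le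
      (T := T.map (Function.Embedding.subtype _)) (c := z)
      (by simpa [dist_comm] using hT) (hSsep.mono (by simp))
    rw [Finset.card_map, Complex.finrank_real_complex] at hcard
    rw [← ENNReal.ofReal_natCast]
    refine ENNReal.ofReal_le_ofReal (hcard.trans (pow_le_pow_left₀ (by positivity) ?_ 2))
    rw [div_le_div_iff₀ (by positivity) hβ]
    nlinarith [mul_le_mul_of_nonneg_right hβ1 (mul_pos hβ hρ).le]
  set g : ℂ → ℝ≥0∞ := fun z => ENNReal.ofReal (‖E z‖ ^ 2 * Real.exp (-h z))
  have hg : Measurable g := by have := hE.continuous; fun_prop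
  calc ∫⁻ z, (∑' lam : S, ENNReal.ofReal (1 / ‖z - (lam : ℂ)‖ ^ 2)) * g z
      = ∫⁻ z, ∑' lam : S, ENNReal.ofReal (1 / ‖z - (lam : ℂ)‖ ^ 2) * g z := by
        simp_rw [ENNReal.tsum_mul_right]
    _ ≤ ENNReal.ofReal (C / ρ ^ 2) * ENNReal.ofReal ((3 / β) ^ 2) *
          ∫⁻ z in ball w₀ ((N + 1) * ρ), g z := by
      refine lintegral_tsum_le_of_local_bounds (fun _ => by fun_prop) hg.aemeasurable
        (fun _ => measurableSet_ball) measurableSet_ball ?_ ?_ hmult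
      · exact fun lam => ball_subset_ball' (by rw [Complex.dist_eq]; linarith [lam.2.2])
      · intro lam
        refine (lintegral_congr fun z => ?_).trans_le (hloc lam lam.2.1 lam.2.2)
        rw [← ENNReal.ofReal_mul (by positivity), one_div_mul_eq_div, mul_div_right_comm]
    _ = _ := by rw [← ENNReal.ofReal_mul (by positivity), div_mul_eq_mul_div]
end
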